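/- arXiv:cs/0307043 — 8 statements merged into one kernel-verified Lean document; each statement's English description precedes it below -/
import Mathlib

section
/- There is a universal constant C > 0 such that for every μ > 0 and every p ∈ (0,1) there exists δ > 0 satisfying ⌈μδ⌉ · G(μ, δ) ≤ p; moreover δ can be chosen so that δ ≤ C · log₂(1/p) / (μ · log₂(log₂(1/p)/μ)) if μ ≤ log₂(1/p)/2, and δ ≤ C · √(log₂(μ + 1/p)/μ) if μ > log₂(1/p)/2. -/
/-! Since `⌈μδ⌉ ≤ 1 + μδ` and `G(μ, δ) = exp (-μ h(δ))` with
`h(δ) = (1 + δ) log (1 + δ) - δ`, it suffices that `μ h(δ) ≥ log (1 + μδ) + log (1/p)`.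

If `μ ≤ log₂(1/p)/2`, put `x = log₂(1/p)/μ ≥ 2` and `δ = 8x / log x`: then
`log (1 + δ) ≥ log x / 2 + 2` because `log log x ≤ log x / 2 - 1 + log 2`, and so
`μ h(δ) - μδ ≥ 4μx ≥ log (1/p)`.

Otherwise `log (1/p) < 2μ log 2`. For `μ ≤ 1/3` take `δ = 3`, so that `⌈μδ⌉ = 1` and
`h(3) > 2 log 2`. For `μ > 1/3` take `δ = 100 √(log₂(μ + 1/p)/μ)`, which is at most
`200` because `log (μ + 1/p) ≤ μ + log (1/p)`; then `h(δ) ≥ δ² / (δ + 2)` makes `μ h(δ)`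
a large multiple of `ℓ = log (μ + 1/p) ≥ 1/4`, while `log (1 + μδ) ≤ ℓ + log (1 + δ)`
and `log (1/p) ≤ ℓ`. -/

/-- The Chernoff–Hoeffding bound function `G(μ, δ) = (e^δ / (1+δ)^(1+δ))^μ`. -/
noncomputable def chernoffG (μ δ : ℝ) : ℝ :=
  (Real.exp δ / (1 + δ) ^ (1 + δ)) ^ μ

open Real

noncomputable def chernoffRate (δ : ℝ) : ℝ := (1 + δ) * log (1 + δ) - δ

lemma chernoffG_eq_exp (μ : ℝ) {δ : ℝ} (hδ : -1 < δ) :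
    chernoffG μ δ = exp (-(μ * chernoffRate δ)) := by
  rw [chernoffG, rpow_def_of_pos (show 0 < 1 + δ by linarith), ← exp_sub, ← exp_mul,
    chernoffRate]
  ring_nf

lemma sq_div_add_two_le_chernoffRate {δ : ℝ} (hδ : 0 ≤ δ) :
    δ ^ 2 / (δ + 2) ≤ chernoffRate δ := by
  have hlog := le_log_one_add_of_nonneg hδ
  rw [div_le_iff₀ (by positivity)] at hlog
  rw [chernoffRate, div_le_iff₀ (by positivity)]
  nlinarith

lemma ceil_mul_chernoffG_le {μ δ : ℝ} (hμ : 0 ≤ μ) (hδ : 0 ≤ δ) :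
    (⌈μ * δ⌉ : ℝ) * chernoffG μ δ ≤ exp (log (1 + μ * δ) - μ * chernoffRate δ) := by
  rw [sub_eq_add_neg, exp_add, exp_log (by positivity), ← chernoffG_eq_exp μ (by linarith)]
  exact mul_le_mul_of_nonneg_right (by linarith [Int.ceil_lt_add_one (μ * δ)])
    (by rw [chernoffG]; positivity)

lemma log_one_div_lt_of_half_logb_lt {μ p : ℝ} (h : logb 2 (1 / p) / 2 < μ) :
    log (1 / p) < 2 * μ * log 2 := by
  rw [logb, div_div, div_lt_iff₀ (by positivity)] at h
  linarith

lemma exp_neg_log_one_div {p : ℝ} (hp : 0 < p) : exp (-log (1 / p)) = p := by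
  rw [one_div, log_inv, neg_neg, exp_log hp]

lemma log_div_two_add_two_le_log_one_add {x : ℝ} (hx : 1 < x) :
    log x / 2 + 2 ≤ log (1 + 8 * x / log x) := by
  have hlx : 0 < log x := log_pos hx
  have hloglog : log (log x) ≤ log x / 2 - 1 + log 2 := by
    have h := log_le_sub_one_of_pos (half_pos hlx)
    rw [log_div hlx.ne' two_ne_zero] at h
    linarith
  have hlogδ : log (8 * x / log x) = 3 * log 2 + log x - log (log x) := by
    rw [log_div (by positivity) hlx.ne', log_mul (by norm_num) (by positivity),
      show (8 : ℝ) = 2 ^ 3 by norm_num, log_pow]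
    push_cast
    ring
  calc log x / 2 + 2 ≤ log (8 * x / log x) := by linarith [log_two_gt_d9]
    _ ≤ log (1 + 8 * x / log x) := log_le_log (by positivity) (by linarith)

/- With `log (1 + μδ) ≤ μδ` and `h(δ) ≥ δ (log (1 + δ) - 1)` this reduces to
`δ (log (1 + δ) - 2) ≥ δ log x / 2 = 4x`. -/
lemma log_one_add_mul_sub_chernoffRate_le {μ x : ℝ} (hμ : 0 ≤ μ) (hx : 1 < x) :
    log (1 + μ * (8 * x / log x)) - μ * chernoffRate (8 * x / log x) ≤ -(4 * μ * x) := by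
  have hlx : 0 < log x := log_pos hx
  set δ := 8 * x / log x with hδ
  have hδ0 : 0 ≤ δ := by positivity
  have hlogδ := log_div_two_add_two_le_log_one_add hx
  have hceil : log (1 + μ * δ) ≤ μ * δ := by
    linarith [log_le_sub_one_of_pos (show 0 < 1 + μ * δ by positivity)]
  have hrate : δ * (log x / 2 + 1) ≤ chernoffRate δ := by
    rw [chernoffRate]
    nlinarith [log_nonneg (show 1 ≤ 1 + δ by linarith)]
  have hδlog : δ * log x = 8 * x := by rw [hδ]; field_simp
  nlinarith [mul_le_mul_of_nonneg_left hrate hμ]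

lemma exists_delta_of_le_half_logb {μ p : ℝ} (hμ : 0 < μ) (hp : 0 < p)
    (h : μ ≤ logb 2 (1 / p) / 2) :
    ∃ δ : ℝ, 0 < δ ∧ (⌈μ * δ⌉ : ℝ) * chernoffG μ δ ≤ p ∧
      δ ≤ 100 * logb 2 (1 / p) / (μ * logb 2 (logb 2 (1 / p) / μ)) := by
  set x := logb 2 (1 / p) / μ with hx
  have hx2 : 2 ≤ x := by rw [hx, le_div_iff₀ hμ]; linarith
  have hlx : 0 < log x := log_pos (by linarith)
  have hL : logb 2 (1 / p) = μ * x := by rw [hx]; field_simp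
  refine ⟨8 * x / log x, by positivity, ?_, ?_⟩
  · calc (⌈μ * (8 * x / log x)⌉ : ℝ) * chernoffG μ (8 * x / log x)
        ≤ exp (-(4 * μ * x)) :=
          (ceil_mul_chernoffG_le hμ.le (by positivity)).trans
            (exp_le_exp.2 (log_one_add_mul_sub_chernoffRate_le hμ.le (by linarith)))
      _ ≤ exp (-log (1 / p)) := by
          rw [← div_mul_cancel₀ (log (1 / p)) (log_pos one_lt_two).ne', ← logb, hL]
          exact exp_le_exp.2 (by nlinarith [log_two_lt_d9, mul_pos hμ (show 0 < x by linarith)])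
      _ = p := exp_neg_log_one_div hp
  · rw [hL, logb, show 100 * (μ * x) / (μ * (log x / log 2)) = 100 * log 2 * x / log x by
      field_simp]
    gcongr
    linarith [log_two_gt_d9]

lemma ceil_mul_chernoffG_three_le {μ p : ℝ} (hμ : 0 < μ) (hμ3 : μ ≤ 1 / 3) (hp : 0 < p)
    (h : logb 2 (1 / p) / 2 < μ) : (⌈μ * 3⌉ : ℝ) * chernoffG μ 3 ≤ p := by
  have hceil : ⌈μ * 3⌉ = 1 := by
    rw [Int.ceil_eq_iff]
    constructor <;> push_cast <;> linarith
  have hrate : chernoffRate 3 = 8 * log 2 - 3 := by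
    rw [chernoffRate, show (1 : ℝ) + 3 = 2 ^ 2 by norm_num, log_pow]
    push_cast
    ring
  rw [hceil, Int.cast_one, one_mul, chernoffG_eq_exp μ (by norm_num), hrate,
    ← exp_neg_log_one_div hp]
  exact exp_le_exp.2 (by nlinarith [log_one_div_lt_of_half_logb_lt h, log_two_gt_d9])

lemma log_one_add_le_log_add_one_div {μ p : ℝ} (hμ : 0 ≤ μ) (hp : 0 < p) (hp1 : p ≤ 1) :
    log (1 + μ) ≤ log (μ + 1 / p) :=
  log_le_log (by positivity) (by linarith [one_le_one_div hp hp1])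

lemma log_add_one_div_le {μ p : ℝ} (hμ : 0 ≤ μ) (hp : 0 < p) (hp1 : p ≤ 1) :
    log (μ + 1 / p) ≤ μ + log (1 / p) :=
  calc log (μ + 1 / p) ≤ log ((1 + μ) * (1 / p)) :=
        log_le_log (by positivity) (by nlinarith [one_le_one_div hp hp1])
    _ = log (1 + μ) + log (1 / p) := log_mul (by positivity) (by positivity)
    _ ≤ μ + log (1 / p) := by linarith [log_le_sub_one_of_pos (show 0 < 1 + μ by positivity)]

lemma three_le_mul_sqrt_logb {μ p : ℝ} (hμ : 0 < μ) (hμ1 : μ ≤ 1) (hp : 0 < p)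
    (hp1 : p ≤ 1) :
    3 ≤ 100 * √(logb 2 (μ + 1 / p) / μ) := by
  have hlow : 2 * μ / (μ + 2) ≤ log (μ + 1 / p) :=
    (le_log_one_add_of_nonneg hμ.le).trans (log_one_add_le_log_add_one_div hμ.le hp hp1)
  have hratio : 1 / 4 ≤ logb 2 (μ + 1 / p) / μ := by
    rw [le_div_iff₀ hμ, logb]
    calc 1 / 4 * μ ≤ 2 * μ / (μ + 2) := by rw [le_div_iff₀ (by positivity)]; nlinarith
      _ ≤ log (μ + 1 / p) := hlow
      _ ≤ log (μ + 1 / p) / log 2 :=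
          le_div_self (hlow.trans' (by positivity)) (log_pos one_lt_two)
            (by linarith [log_two_lt_d9])
  have hsqrt : 1 / 2 ≤ √(logb 2 (μ + 1 / p) / μ) :=
    (le_sqrt' (by norm_num)).2 (by linarith)
  linarith

lemma log_one_add_mul_sub_chernoffRate_le_of_sq_le {μ δ ℓ : ℝ} (hμ : 0 ≤ μ)
    (hδ : 0 ≤ δ) (hδ200 : δ ≤ 200) (hℓ : log (1 + μ) ≤ ℓ)
    (hsq : 10000 * ℓ ≤ μ * δ ^ 2) :
    log (1 + μ * δ) - μ * chernoffRate δ ≤ 8 * log 2 - 48 * ℓ := by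
  have hℓ0 : 0 ≤ ℓ := hℓ.trans' (log_nonneg (by linarith))
  have hceil : log (1 + μ * δ) ≤ ℓ + 8 * log 2 :=
    calc log (1 + μ * δ) ≤ log ((1 + μ) * (1 + δ)) :=
          log_le_log (by positivity) (by nlinarith)
      _ = log (1 + μ) + log (1 + δ) := log_mul (by positivity) (by positivity)
      _ ≤ ℓ + log (2 ^ 8) := by gcongr; norm_num; linarith
      _ = ℓ + 8 * log 2 := by rw [log_pow]; push_cast; ring
  have hrate : 49 * ℓ ≤ μ * chernoffRate δ :=
    calc 49 * ℓ ≤ 10000 * ℓ / (δ + 2) := by rw [le_div_iff₀ (by positivity)]; nlinarith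
      _ ≤ μ * (δ ^ 2 / (δ + 2)) := by rw [mul_div_assoc']; gcongr
      _ ≤ μ * chernoffRate δ := by gcongr; exact sq_div_add_two_le_chernoffRate hδ
  linarith

lemma ceil_mul_chernoffG_mul_sqrt_le {μ p : ℝ} (hμ : 1 / 3 < μ) (hp : 0 < p) (hp1 : p ≤ 1)
    (h : logb 2 (1 / p) / 2 < μ) :
    (⌈μ * (100 * √(logb 2 (μ + 1 / p) / μ))⌉ : ℝ) *
      chernoffG μ (100 * √(logb 2 (μ + 1 / p) / μ)) ≤ p := by
  have hμ0 : 0 < μ := by linarith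
  have hl2 : 0 < log 2 := log_pos one_lt_two
  have hℓ := log_one_div_lt_of_half_logb_lt h
  have hℓℓ' : log (1 / p) ≤ log (μ + 1 / p) := log_le_log (by positivity) (by linarith)
  have hℓ'ℓ := log_add_one_div_le hμ0.le hp hp1
  have hℓ'1 := log_one_add_le_log_add_one_div hμ0.le hp hp1
  have hℓ'low : 1 / 4 ≤ log (μ + 1 / p) := hℓ'1.trans' <|
    (le_log_one_add_of_nonneg hμ0.le).trans' (by rw [le_div_iff₀ (by positivity)]; linarith)
  set δ := 100 * √(logb 2 (μ + 1 / p) / μ) with hδ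
  have hratio : logb 2 (μ + 1 / p) / μ = log (μ + 1 / p) / (μ * log 2) := by
    rw [logb, div_div, mul_comm]
  have hsq : 10000 * log (μ + 1 / p) ≤ μ * δ ^ 2 := by
    rw [hδ, mul_pow, sq_sqrt (by rw [hratio]; positivity), hratio]
    rw [show μ * (100 ^ 2 * (log (μ + 1 / p) / (μ * log 2)))
      = 10000 * log (μ + 1 / p) / log 2 by field_simp; ring]
    exact le_div_self (by positivity) hl2 (by linarith [log_two_lt_d9])
  have hδ200 : δ ≤ 200 := by
    have : √(logb 2 (μ + 1 / p) / μ) ≤ 2 := by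
      rw [sqrt_le_left (by norm_num), hratio, div_le_iff₀ (by positivity)]
      nlinarith [log_two_gt_d9]
    linarith
  calc _ ≤ exp (log (1 + μ * δ) - μ * chernoffRate δ) :=
        ceil_mul_chernoffG_le hμ0.le (by positivity)
    _ ≤ exp (-log (1 / p)) := exp_le_exp.2 <| by
        linarith [log_two_lt_d9, log_one_add_mul_sub_chernoffRate_le_of_sq_le hμ0.le
          (by positivity) hδ200 hℓ'1 hsq]
    _ = p := exp_neg_log_one_div hp

/-- There is a universal constant `C > 0` such that for every `μ > 0` and
every `p ∈ (0,1)` there exists `δ > 0` with `⌈μδ⌉ · G(μ, δ) ≤ p`; moreover `δ` can be chosen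
so that `δ ≤ C · log₂(1/p) / (μ · log₂(log₂(1/p)/μ))` when `μ ≤ log₂(1/p)/2`, and
`δ ≤ C · √(log₂(μ + 1/p)/μ)` when `μ > log₂(1/p)/2`. -/
theorem exists_H_bound :
    ∃ C : ℝ, 0 < C ∧
      ∀ μ p : ℝ, 0 < μ → p ∈ Set.Ioo (0 : ℝ) 1 →
        ∃ δ : ℝ, 0 < δ ∧ (⌈μ * δ⌉ : ℝ) * chernoffG μ δ ≤ p ∧
          (μ ≤ Real.logb 2 (1 / p) / 2 →
            δ ≤ C * Real.logb 2 (1 / p) / (μ * Real.logb 2 (Real.logb 2 (1 / p) / μ))) ∧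
          (Real.logb 2 (1 / p) / 2 < μ →
            δ ≤ C * Real.sqrt (Real.logb 2 (μ + 1 / p) / μ)) := by
  refine ⟨100, by norm_num, fun μ p hμ ⟨hp0, hp1⟩ => ?_⟩
  rcases le_or_gt μ (logb 2 (1 / p) / 2) with hsmall | hlarge
  · obtain ⟨δ, hδ, hG, hδle⟩ := exists_delta_of_le_half_logb hμ hp0 hsmall
    exact ⟨δ, hδ, hG, fun _ => hδle, fun h => absurd hsmall h.not_ge⟩
  rcases le_or_gt μ (1 / 3) with hμ3 | hμ3
  · exact ⟨3, by norm_num, ceil_mul_chernoffG_three_le hμ hμ3 hp0 hlarge,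
      fun h => absurd hlarge h.not_gt,
      fun _ => three_le_mul_sqrt_logb hμ (by linarith) hp0 hp1.le⟩
  · have hsqrt : 0 < √(logb 2 (μ + 1 / p) / μ) :=
      sqrt_pos.2 (div_pos (logb_pos one_lt_two (by linarith [one_lt_one_div hp0 hp1])) hμ)
    exact ⟨_, by positivity, ceil_mul_chernoffG_mul_sqrt_le hμ3 hp0 hp1.le hlarge,
      fun h => absurd hlarge h.not_gt, fun _ => le_rfl⟩
end

section
/- Let X_1, …, X_n be random variables (not necessarily independent) taking values in [0,1], and let X = Σ_{i=1}^n X_i. Then for any real q > 0, any event Z with Pr(Z) > 0, and any nonnegative integer k ≤ q: Pr(X ≥ q | Z) ≤ E[S_k(X_1, …, X_n) | Z] / C(q, k). -/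
open MeasureTheory ProbabilityTheory

/-- The elementary symmetric polynomial `S_k(x_1, …, x_n)`:
sum over all `k`-element subsets of `[n]` of the product of the corresponding variables.
In particular `S_0 = 1`. -/
noncomputable def symS (n k : ℕ) (x : Fin n → ℝ) : ℝ :=
  ∑ T ∈ Finset.univ.powersetCard k, ∏ i ∈ T, x i

/-- The generalized binomial coefficient `C(x, r) = x(x−1)⋯(x−r+1)/r!` for real `x`. -/
noncomputable def genChoose (x : ℝ) (r : ℕ) : ℝ :=
  (∏ i ∈ Finset.range r, (x - i)) / (Nat.factorial r : ℝ)

open Finset in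
lemma symS_identity (n k : ℕ) (x : Fin n → ℝ) :
    ((k : ℝ) + 1) * symS n (k+1) x
      = ∑ T ∈ Finset.univ.powersetCard k, ((∑ i ∈ Tᶜ, x i) * ∏ j ∈ T, x j) := by
  have hL : ((k : ℝ) + 1) * symS n (k+1) x
      = ∑ U ∈ Finset.univ.powersetCard (k+1), ∑ i ∈ U, ∏ j ∈ U, x j := by
    rw [symS, Finset.mul_sum]
    refine Finset.sum_congr rfl fun U hU => ?_
    rw [Finset.sum_const, (Finset.mem_powersetCard.mp hU).2]
    push_cast; ring
  have hR : ∀ T ∈ univ.powersetCard k, (∑ i ∈ Tᶜ, x i) * ∏ j ∈ T, x j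
      = ∑ i ∈ Tᶜ, ∏ j ∈ insert i T, x j := by
    intro T hT
    rw [Finset.sum_mul]
    refine Finset.sum_congr rfl fun i hi => ?_
    rw [Finset.prod_insert (by simpa using (Finset.mem_compl.mp hi))]
  rw [hL, Finset.sum_congr rfl hR, Finset.sum_sigma', Finset.sum_sigma']
  refine Finset.sum_nbij' (i := fun p => ⟨p.1.erase p.2, p.2⟩)
    (j := fun p => ⟨insert p.2 p.1, p.2⟩) ?_ ?_ ?_ ?_ ?_
  · rintro ⟨U, i⟩ hp
    simp only [Finset.mem_sigma, Finset.mem_powersetCard] at hp ⊢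
    obtain ⟨⟨_, hcard⟩, hi⟩ := hp
    refine ⟨⟨Finset.subset_univ _, ?_⟩, ?_⟩
    · rw [Finset.card_erase_of_mem hi, hcard]; omega
    · simp [Finset.mem_erase]
  · rintro ⟨T, i⟩ hp
    simp only [Finset.mem_sigma, Finset.mem_powersetCard, Finset.mem_compl] at hp ⊢
    obtain ⟨⟨_, hcard⟩, hi⟩ := hp
    exact ⟨⟨Finset.subset_univ _, by rw [Finset.card_insert_of_notMem hi, hcard]⟩,
      Finset.mem_insert_self _ _⟩
  · rintro ⟨U, i⟩ hp
    simp only [Finset.mem_sigma] at hp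
    simp [Finset.insert_erase hp.2]
  · rintro ⟨T, i⟩ hp
    simp only [Finset.mem_sigma, Finset.mem_compl] at hp
    simp [Finset.erase_insert hp.2]
  · rintro ⟨U, i⟩ hp
    simp only [Finset.mem_sigma] at hp
    simp [Finset.insert_erase hp.2]


lemma symS_nonneg {n k : ℕ} {x : Fin n → ℝ} (hx : ∀ i, 0 ≤ x i) : 0 ≤ symS n k x :=
  Finset.sum_nonneg fun T _ => Finset.prod_nonneg fun i _ => hx i

lemma genChoose_succ (s : ℝ) (k : ℕ) :
    genChoose s (k+1) = genChoose s k * (s - k) / (k+1) := by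
  rw [genChoose, genChoose, Finset.prod_range_succ, Nat.factorial_succ]
  push_cast
  rw [div_mul_eq_mul_div, div_div, mul_comm ((k:ℝ)+1) _]

lemma symS_step {n k : ℕ} {x : Fin n → ℝ} (hx : ∀ i, x i ∈ Set.Icc (0:ℝ) 1)
    (hs : (k : ℝ) ≤ ∑ i, x i) :
    ((∑ i, x i) - k) * symS n k x ≤ ((k : ℝ) + 1) * symS n (k+1) x := by
  rw [symS_identity, symS, Finset.mul_sum]
  refine Finset.sum_le_sum fun T hT => ?_
  have hcard : T.card = k := (Finset.mem_powersetCard.mp hT).2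
  have hprod : 0 ≤ ∏ j ∈ T, x j := Finset.prod_nonneg fun i _ => (hx i).1
  have h1 : (∑ i, x i) - k ≤ ∑ i ∈ Tᶜ, x i := by
    have : ∑ i ∈ T, x i ≤ (k : ℝ) := by
      calc ∑ i ∈ T, x i ≤ ∑ i ∈ T, (1:ℝ) := Finset.sum_le_sum fun i _ => (hx i).2
        _ = k := by rw [Finset.sum_const, hcard]; simp
    have hsplit : ∑ i ∈ T, x i + ∑ i ∈ Tᶜ, x i = ∑ i, x i := by
      rw [Finset.sum_add_sum_compl]
    linarith
  exact mul_le_mul_of_nonneg_right h1 hprod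

lemma genChoose_le_symS {n k : ℕ} {x : Fin n → ℝ} (hx : ∀ i, x i ∈ Set.Icc (0:ℝ) 1)
    (hs : (k : ℝ) - 1 ≤ ∑ i, x i) :
    genChoose (∑ i, x i) k ≤ symS n k x := by
  induction k with
  | zero => simp [genChoose, symS]
  | succ k ih =>
    have hk : (k : ℝ) ≤ ∑ i, x i := by push_cast at hs ⊢; linarith
    have ih' := ih (by linarith)
    rw [genChoose_succ]
    have hk1 : (0:ℝ) < (k:ℝ) + 1 := by positivity
    rw [div_le_iff₀ hk1]
    have h1 : genChoose (∑ i, x i) k * ((∑ i, x i) - k) ≤ symS n k x * ((∑ i, x i) - k) :=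
      mul_le_mul_of_nonneg_right ih' (by linarith)
    calc genChoose (∑ i, x i) k * ((∑ i, x i) - k) ≤ symS n k x * ((∑ i, x i) - k) := h1
      _ = ((∑ i, x i) - k) * symS n k x := by ring
      _ ≤ ((k:ℝ) + 1) * symS n (k+1) x := symS_step hx hk
      _ = symS n (k+1) x * ((k:ℝ)+1) := by ring

lemma genChoose_mono {q s : ℝ} {k : ℕ} (hk : (k:ℝ) ≤ q) (hqs : q ≤ s) :
    genChoose q k ≤ genChoose s k := by
  unfold genChoose
  apply div_le_div_of_nonneg_right ?_ (by positivity)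
  apply Finset.prod_le_prod
  · intro i hi
    have : (i:ℝ) < k := by exact_mod_cast Finset.mem_range.mp hi
    linarith
  · intro i hi
    linarith


lemma genChoose_pos {q : ℝ} {k : ℕ} (hk : (k:ℝ) ≤ q) (hq : 0 < q) : 0 < genChoose q k := by
  rw [genChoose]
  apply div_pos
  · apply Finset.prod_pos
    intro i hi
    have : (i:ℝ) < k := by exact_mod_cast Finset.mem_range.mp hi
    linarith
  · exact Nat.cast_pos.mpr k.factorial_pos


/-- For (not necessarily independent) random variables `X_1, …, X_n ∈ [0,1]`
with `X = Σ X_i`, any real `q > 0`, any event `Z` of positive probability, and any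
nonnegative integer `k ≤ q`:
`Pr(X ≥ q | Z) ≤ E[S_k(X_1, …, X_n) | Z] / C(q, k)`. -/
theorem symmetric_poly_tail_bound
    {Ω : Type*} [MeasureSpace Ω] [IsProbabilityMeasure (ℙ : Measure Ω)]
    (n : ℕ) (X : Fin n → Ω → ℝ)
    (hXmeas : ∀ i, Measurable (X i))
    (hXrange : ∀ i ω, X i ω ∈ Set.Icc (0 : ℝ) 1)
    (q : ℝ) (hq : 0 < q) (k : ℕ) (hk : (k : ℝ) ≤ q)
    (Z : Set Ω) (hZmeas : MeasurableSet Z) (hZpos : 0 < ℙ Z) :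
    (ℙ[|Z] {ω | q ≤ ∑ i, X i ω}).toReal ≤
      (∫ ω, symS n k (fun i => X i ω) ∂(ℙ[|Z])) / genChoose q k := by
  set μ := ℙ[|Z] with hμ
  haveI : IsProbabilityMeasure μ := cond_isProbabilityMeasure hZpos.ne'
  set A : Set Ω := {ω | q ≤ ∑ i, X i ω} with hA
  set f : Ω → ℝ := fun ω => symS n k (fun i => X i ω) with hf
  have hC : 0 < genChoose q k := genChoose_pos hk hq
  have hsummeas : Measurable fun ω => ∑ i, X i ω :=
    Finset.measurable_sum _ fun i _ => hXmeas i
  have hAmeas : MeasurableSet A := measurableSet_le measurable_const hsummeas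
  have hfmeas : Measurable f := by
    apply Finset.measurable_sum
    intro T _
    exact Finset.measurable_prod _ fun i _ => hXmeas i
  have hfbound : ∀ ω, |f ω| ≤ ((Finset.univ.powersetCard k : Finset (Finset (Fin n))).card : ℝ) := by
    intro ω
    rw [abs_of_nonneg (symS_nonneg fun i => (hXrange i ω).1)]
    calc f ω ≤ ∑ T ∈ Finset.univ.powersetCard k, (1:ℝ) := by
          apply Finset.sum_le_sum
          intro T _
          exact Finset.prod_le_one (fun i _ => (hXrange i ω).1) (fun i _ => (hXrange i ω).2)
      _ = _ := by rw [Finset.sum_const]; simp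
  have hfint : Integrable f μ :=
    (integrable_const _).mono' hfmeas.aestronglyMeasurable (ae_of_all _ hfbound)
  have hpt : ∀ ω, A.indicator (fun _ => genChoose q k) ω ≤ f ω := by
    intro ω
    by_cases hω : ω ∈ A
    · rw [Set.indicator_of_mem hω]
      have hs : q ≤ ∑ i, X i ω := hω
      calc genChoose q k ≤ genChoose (∑ i, X i ω) k := genChoose_mono hk hs
        _ ≤ f ω := genChoose_le_symS (fun i => hXrange i ω) (by linarith)
    · rw [Set.indicator_of_notMem hω]
      exact symS_nonneg fun i => (hXrange i ω).1
  have h1 : ∫ ω, A.indicator (fun _ => genChoose q k) ω ∂μ ≤ ∫ ω, f ω ∂μ :=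
    integral_mono ((integrable_const _).indicator hAmeas) hfint hpt
  rw [integral_indicator_const _ hAmeas] at h1
  rw [le_div_iff₀ hC]
  calc (μ A).toReal * genChoose q k = (μ A).toReal • genChoose q k := by rw [smul_eq_mul]
    _ ≤ ∫ ω, f ω ∂μ := h1
end

section
/- Let X_1, …, X_n be independent random variables taking values in [0,1] and let μ = E[Σ_{i=1}^n X_i]. Then for every integer k with 0 ≤ k ≤ n: E[S_k(X_1, …, X_n)] ≤ C(n, k) · (μ/n)^k ≤ μ^k / k!. -/
/-!
Independence turns `E[S_k(X)]` into `S_k(m)` with `m_i = E[X_i]`. The bound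
`S_k(m) ≤ C(n, k) (Σ m_i / n)^k` is Maclaurin's inequality: by induction on the number of variables,
using `S_{k+1}(x, s) = S_{k+1}(s) + x S_k(s)`, it reduces to the tangent line inequality
`a^{k+1} + (k+1) a^k (b - a) ≤ b^{k+1}` for the convex function `t ↦ t^{k+1}`.
Finally `C(n, k) ≤ n^k / k!`.
-/

open MeasureTheory ProbabilityTheory

namespace Multiset

theorem esymm_cons_succ {R : Type*} [CommSemiring R] (a : R) (s : Multiset R) (k : ℕ) :
    (a ::ₘ s).esymm (k + 1) = s.esymm (k + 1) + a * s.esymm k := by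
  simp [esymm, powersetCard_cons, sum_map_mul_left]

end Multiset

section LinearOrderedField

variable {R : Type*} [Field R] [LinearOrder R] [IsStrictOrderedRing R]

/-- `(m + 1) * b - m * a` is the number that moves the mean of `m` numbers from `a` to `b`. -/
theorem choose_mul_pow_add_le_choose_succ_mul_pow (m k : ℕ) {a b : R} (ha : 0 ≤ a) (hb : 0 ≤ b) :
    m.choose (k + 1) * a ^ (k + 1) + ((m + 1) * b - m * a) * (m.choose k * a ^ k) ≤
      (m + 1).choose (k + 1) * b ^ (k + 1) := by
  have hsucc : ((m + 1).choose (k + 1) : R) = m.choose k + m.choose (k + 1) := by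
    exact_mod_cast Nat.choose_succ_succ m k
  have hmul : ((m + 1 : ℕ) : R) * m.choose k = (m + 1).choose (k + 1) * (k + 1 : ℕ) := by
    exact_mod_cast Nat.add_one_mul_choose_eq m k
  have bernoulli := pow_add_mul_le_add_pow ha (by linarith : 0 ≤ 2 * a + (b - a)) (k + 1)
  simp only [add_tsub_cancel_right, add_sub_cancel] at bernoulli
  push_cast at hmul bernoulli
  have hc : (0 : R) ≤ (m + 1).choose (k + 1) := Nat.cast_nonneg _
  linear_combination
    (mul_le_mul_of_nonneg_left bernoulli hc) + a ^ k * (b - a) * hmul - a ^ (k + 1) * hsucc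

namespace Multiset

theorem esymm_le_choose_mul_sum_div_card_pow (s : Multiset R) (hs : ∀ x ∈ s, 0 ≤ x) (k : ℕ) :
    s.esymm k ≤ (card s).choose k * (s.sum / card s) ^ k := by
  induction s using Multiset.induction_on generalizing k with
  | empty => cases k <;> simp [esymm, powersetCard_zero_right]
  | cons x s ih =>
    cases k with
    | zero => simp [esymm]
    | succ k =>
      have hs' : ∀ y ∈ s, 0 ≤ y := fun y hy => hs y (mem_cons_of_mem hy)
      have hx : 0 ≤ x := hs x (mem_cons_self x s)
      set a := s.sum / card s
      have hsum : (card s : R) * a = s.sum := by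
        rcases eq_or_ne s 0 with rfl | hne
        · simp
        · exact mul_div_cancel₀ _ (by simpa using hne)
      set b := (x ::ₘ s).sum / card (x ::ₘ s)
      have hb : x = (card s + 1) * b - card s * a := by
        rw [hsum, show b = (x + s.sum) / (card s + 1) by simp [b]]
        field_simp
        ring
      calc (x ::ₘ s).esymm (k + 1) = s.esymm (k + 1) + x * s.esymm k := esymm_cons_succ x s k
        _ ≤ (card s).choose (k + 1) * a ^ (k + 1) + x * ((card s).choose k * a ^ k) := by
          gcongr
          exacts [ih hs' _, ih hs' k]
        _ ≤ (card s + 1).choose (k + 1) * b ^ (k + 1) := by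
          rw [hb]
          exact choose_mul_pow_add_le_choose_succ_mul_pow _ _
            (div_nonneg (sum_nonneg hs') (Nat.cast_nonneg _))
            (div_nonneg (sum_nonneg hs) (Nat.cast_nonneg _))
        _ = _ := by rw [card_cons]

end Multiset

end LinearOrderedField

theorem symS_eq_esymm (n k : ℕ) (x : Fin n → ℝ) :
    symS n k x = (Finset.univ.val.map x).esymm k :=
  (Finset.esymm_map_val x _ k).symm

theorem symS_le_choose_mul_sum_div_pow {n : ℕ} (k : ℕ) {x : Fin n → ℝ} (hx : ∀ i, 0 ≤ x i) :
    symS n k x ≤ n.choose k * ((∑ i, x i) / n) ^ k := by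
  have hx' : ∀ y ∈ Finset.univ.val.map x, 0 ≤ y := by simpa using hx
  have := (Finset.univ.val.map x).esymm_le_choose_mul_sum_div_card_pow hx' k
  rwa [Multiset.card_map, Finset.card_val, Finset.card_univ, Fintype.card_fin,
    ← symS_eq_esymm] at this

theorem choose_mul_div_pow_le_pow_div_factorial (n k : ℕ) {μ : ℝ} (hμ : 0 ≤ μ) :
    n.choose k * (μ / n) ^ k ≤ μ ^ k / k.factorial := by
  have hmean : n * (μ / n) ≤ μ := by
    rcases eq_or_ne n 0 with rfl | hn
    · simpa using hμ
    · rw [mul_div_cancel₀ _ (Nat.cast_ne_zero.mpr hn)]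
  calc n.choose k * (μ / n) ^ k ≤ n ^ k / k.factorial * (μ / n) ^ k := by
        gcongr
        exact Nat.choose_le_pow_div k n
    _ = (n * (μ / n)) ^ k / k.factorial := by ring
    _ ≤ μ ^ k / k.factorial := by gcongr

theorem ProbabilityTheory.iIndepFun.integral_finset_prod_eq_prod_integral {Ω ι 𝕜 : Type*}
    [MeasurableSpace Ω] {P : Measure Ω} [RCLike 𝕜] {X : ι → Ω → 𝕜} (hX : iIndepFun X P)
    (mX : ∀ i, AEStronglyMeasurable (X i) P) (T : Finset ι) :
    ∫ ω, ∏ i ∈ T, X i ω ∂P = ∏ i ∈ T, ∫ ω, X i ω ∂P := by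
  simp_rw [← Finset.prod_coe_sort T]
  exact (hX.precomp Subtype.val_injective).integral_fun_prod_eq_prod_integral fun i => mX i

theorem integral_symS_eq_symS_integral {Ω : Type*} [MeasurableSpace Ω] {P : Measure Ω}
    [IsFiniteMeasure P] {n : ℕ} (k : ℕ) {X : Fin n → Ω → ℝ} (hX : iIndepFun X P)
    (mX : ∀ i, Measurable (X i)) (hX01 : ∀ i ω, X i ω ∈ Set.Icc (0 : ℝ) 1) :
    ∫ ω, symS n k (fun i => X i ω) ∂P = symS n k (fun i => ∫ ω, X i ω ∂P) := by
  have hint (T : Finset (Fin n)) : Integrable (fun ω => ∏ i ∈ T, X i ω) P :=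
    .of_mem_Icc 0 1 (Finset.measurable_prod T fun i _ => mX i).aemeasurable <|
      .of_forall fun ω => ⟨Finset.prod_nonneg fun i _ => (hX01 i ω).1,
        Finset.prod_le_one (fun i _ => (hX01 i ω).1) fun i _ => (hX01 i ω).2⟩
  unfold symS
  rw [integral_finsetSum _ fun T _ => hint T]
  exact Finset.sum_congr rfl fun T _ =>
    hX.integral_finset_prod_eq_prod_integral (fun i => (mX i).aestronglyMeasurable) T

theorem esymm_expectation_bound_general
    {Ω : Type*} [MeasureSpace Ω] [IsProbabilityMeasure (ℙ : Measure Ω)]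
    (n : ℕ) (X : Fin n → Ω → ℝ)
    (hXmeas : ∀ i, Measurable (X i))
    (hXrange : ∀ i ω, X i ω ∈ Set.Icc (0 : ℝ) 1)
    (hindep : iIndepFun X ℙ)
    (μ : ℝ) (hμ : μ = ∫ ω, (∑ i, X i ω) ∂ℙ)
    (k : ℕ) :
    (∫ ω, symS n k (fun i => X i ω) ∂ℙ) ≤ (n.choose k : ℝ) * (μ / n) ^ k ∧
      (n.choose k : ℝ) * (μ / n) ^ k ≤ μ ^ k / (Nat.factorial k : ℝ) := by
  have hmean : μ = ∑ i, ∫ ω, X i ω := by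
    rw [hμ, integral_finsetSum _ fun i _ =>
      Integrable.of_mem_Icc 0 1 (hXmeas i).aemeasurable (.of_forall (hXrange i))]
  have hμ0 : 0 ≤ μ := hμ ▸ integral_nonneg fun ω => Finset.sum_nonneg fun i _ => (hXrange i ω).1
  refine ⟨?_, choose_mul_div_pow_le_pow_div_factorial n k hμ0⟩
  rw [integral_symS_eq_symS_integral k hindep hXmeas hXrange, hmean]
  exact symS_le_choose_mul_sum_div_pow k fun i => integral_nonneg fun ω => (hXrange i ω).1

/-- For independent random variables `X_1, …, X_n ∈ [0,1]` with
`μ = E[Σ X_i]`, for every integer `0 ≤ k ≤ n`: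
`E[S_k(X_1, …, X_n)] ≤ C(n, k) · (μ/n)^k ≤ μ^k / k!`. -/
theorem esymm_expectation_bound
    {Ω : Type*} [MeasureSpace Ω] [IsProbabilityMeasure (ℙ : Measure Ω)]
    (n : ℕ) (X : Fin n → Ω → ℝ)
    (hXmeas : ∀ i, Measurable (X i))
    (hXrange : ∀ i ω, X i ω ∈ Set.Icc (0 : ℝ) 1)
    (hindep : iIndepFun X ℙ)
    (μ : ℝ) (hμ : μ = ∫ ω, (∑ i, X i ω) ∂ℙ)
    (k : ℕ) (hk : k ≤ n) :
    (∫ ω, symS n k (fun i => X i ω) ∂ℙ) ≤ (n.choose k : ℝ) * (μ / n) ^ k ∧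
      (n.choose k : ℝ) * (μ / n) ^ k ≤ μ ^ k / (Nat.factorial k : ℝ) :=
  esymm_expectation_bound_general n X hXmeas hXrange hindep μ hμ k
end

section
/- Consider an MIP with matrix A ∈ [0,1]^{m×N} and a fractional solution x* ∈ [0,1]^N satisfying Σ_{j ∈ [ℓ_i]} x*_{i,j} = 1 for every i ∈ [n]. Let b = Ax*, assume b_r > 0 for every r ∈ [m], and let y* = max_{r ∈ [m]} b_r. Then for every positive integer k such that G(y*, k/y*) ≤ 1/(e·k·t), there exists an integral vector z ∈ {0,1}^N with exactly one entry equal to 1 in each block {(i,j) : j ∈ [ℓ_i]} such that (Az)_r ≤ b_r + k for every r ∈ [m]. -/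
open Finset Polynomial
open scoped Nat

theorem descPochhammer_eval_add_le {k : ℕ} {a u : ℝ} (hu0 : 0 ≤ u) (hu1 : u ≤ 1)
    (ha : (k : ℝ) ≤ a) :
    (descPochhammer ℝ (k + 1)).eval (a + u) ≤
      (descPochhammer ℝ (k + 1)).eval a + u * (k + 1) * (descPochhammer ℝ k).eval a := by
  induction k with
  | zero => simp
  | succ k ih =>
    push_cast at ha
    have ih := ih (by linarith)
    have hP : 0 ≤ (descPochhammer ℝ k).eval a := descPochhammer_nonneg (by linarith)
    rw [descPochhammer_succ_eval (k + 1) (a + u), descPochhammer_succ_eval (k + 1) a,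
      descPochhammer_succ_eval k a] at *
    push_cast at *
    nlinarith [mul_le_mul_of_nonneg_right ih (by linarith : 0 ≤ a + u - (k + 1)),
      mul_nonneg (mul_nonneg (mul_nonneg hu0 hP) (sub_nonneg.2 hu1))
        (by positivity : (0 : ℝ) ≤ k + 1)]

theorem descPochhammer_eval_add_le_of_lt {k : ℕ} {a u : ℝ} (hu0 : 0 ≤ u) (hu1 : u ≤ 1)
    (ha : (k : ℝ) - 1 ≤ a) (hak : a < k) (hau : k ≤ a + u) :
    (descPochhammer ℝ (k + 1)).eval (a + u) ≤ u * (k + 1) * (descPochhammer ℝ k).eval a := by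
  cases k with
  | zero => simp at hak ⊢; linarith
  | succ k =>
    push_cast at ha hak hau
    have hprev := descPochhammer_eval_add_le (k := k) hu0 hu1 (by linarith)
    have hP : 0 ≤ (descPochhammer ℝ k).eval a := descPochhammer_nonneg (by linarith)
    rw [descPochhammer_succ_eval (k + 1) (a + u), descPochhammer_succ_eval k a] at *
    push_cast at *
    nlinarith [mul_le_mul_of_nonneg_right hprev (by linarith : 0 ≤ a + u - (k + 1)),
      mul_nonneg hP (mul_nonneg (by linarith : 0 ≤ a - k) (by linarith : 0 ≤ k + 1 - a)),
      mul_nonneg (mul_nonneg (mul_nonneg hu0 hP) (sub_nonneg.2 hu1))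
        (by positivity : (0 : ℝ) ≤ k + 1)]

theorem sum_powersetCard_succ_insert_prod {ι M : Type*} [DecidableEq ι] [CommSemiring M]
    (X : ι → M) {s : Finset ι} {i₀ : ι} (hi₀ : i₀ ∉ s) (k : ℕ) :
    ∑ S ∈ (insert i₀ s).powersetCard (k + 1), ∏ i ∈ S, X i =
      ∑ S ∈ s.powersetCard (k + 1), ∏ i ∈ S, X i + X i₀ * ∑ S ∈ s.powersetCard k, ∏ i ∈ S, X i := by
  have hnot : ∀ S ∈ s.powersetCard k, i₀ ∉ S := fun S hS h => hi₀ ((mem_powersetCard.1 hS).1 h)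
  rw [powersetCard_succ_insert hi₀, sum_union, sum_image, mul_sum]
  · exact congrArg _ (sum_congr rfl fun S hS => prod_insert (hnot S hS))
  · exact fun S hS S' hS' h => by rw [← erase_insert (hnot S hS), ← erase_insert (hnot S' hS'), h]
  · refine disjoint_left.2 fun S hS hS' => ?_
    obtain ⟨S', hS', rfl⟩ := mem_image.1 hS'
    exact hi₀ ((mem_powersetCard.1 hS).1 (mem_insert_self _ _))

theorem descPochhammer_eval_le_factorial_mul_esymm {ι : Type*} [DecidableEq ι] (X : ι → ℝ)
    {s : Finset ι} (hX : ∀ i ∈ s, X i ∈ Set.Icc (0 : ℝ) 1) {k : ℕ} {a : ℝ}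
    (hka : (k : ℝ) - 1 ≤ a) (has : a ≤ ∑ i ∈ s, X i) :
    (descPochhammer ℝ k).eval a ≤ k ! * ∑ S ∈ s.powersetCard k, ∏ i ∈ S, X i := by
  induction s using Finset.induction_on generalizing k a with
  | empty =>
    cases k with
    | zero => simp
    | succ k =>
      push_cast at hka
      rw [sum_empty] at has
      rw [powersetCard_eq_empty.2 (by simp), sum_empty, mul_zero, descPochhammer_succ_eval]
      exact mul_nonpos_of_nonneg_of_nonpos (descPochhammer_nonneg (by linarith)) (by linarith)
  | insert i₀ s hi₀ ih =>
    cases k with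
    | zero => simp
    | succ k =>
      obtain ⟨hu0, hu1⟩ := hX i₀ (mem_insert_self _ _)
      have hXs : ∀ i ∈ s, X i ∈ Set.Icc (0 : ℝ) 1 := fun i hi => hX i (mem_insert_of_mem hi)
      obtain ⟨a, rfl⟩ : ∃ a', a = a' + X i₀ := ⟨a - X i₀, by ring⟩
      rw [sum_insert hi₀] at has
      push_cast at hka
      have hE : 0 ≤ ∑ S ∈ s.powersetCard (k + 1), ∏ i ∈ S, X i :=
        sum_nonneg fun S hS => prod_nonneg fun i hi => (hXs i ((mem_powersetCard.1 hS).1 hi)).1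
      -- if `a < k` then `(descPochhammer ℝ (k + 1)).eval a ≤ 0` and only the second term counts
      have hfirst : (descPochhammer ℝ (k + 1)).eval (a + X i₀) ≤
          (k + 1) * k ! * ∑ S ∈ s.powersetCard (k + 1), ∏ i ∈ S, X i +
            X i₀ * (k + 1) * (descPochhammer ℝ k).eval a := by
        by_cases hk : (k : ℝ) ≤ a
        · have ihk1 := ih hXs (k := k + 1) (a := a) (by push_cast; linarith) (by linarith)
          rw [Nat.factorial_succ] at ihk1
          push_cast at ihk1
          linarith [descPochhammer_eval_add_le hu0 hu1 hk]
        · linarith [descPochhammer_eval_add_le_of_lt hu0 hu1 (by linarith) (not_le.1 hk)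
            (by linarith), mul_nonneg (by positivity : (0 : ℝ) ≤ (k + 1) * k !) hE]
      have ihk := mul_le_mul_of_nonneg_left (ih hXs (k := k) (a := a) (by linarith) (by linarith))
        (by positivity : 0 ≤ X i₀ * ((k : ℝ) + 1))
      rw [sum_powersetCard_succ_insert_prod X hi₀, Nat.factorial_succ]
      push_cast
      linarith

theorem factorial_mul_esymm_le_pow {ι : Type*} [DecidableEq ι] (X : ι → ℝ) {s : Finset ι}
    (hX : ∀ i ∈ s, 0 ≤ X i) (k : ℕ) :
    k ! * ∑ S ∈ s.powersetCard k, ∏ i ∈ S, X i ≤ (∑ i ∈ s, X i) ^ k := by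
  induction s using Finset.induction_on generalizing k with
  | empty =>
    cases k with
    | zero => simp
    | succ k => simp [powersetCard_eq_empty.2 (by simp : (∅ : Finset ι).card < k + 1)]
  | insert i₀ s hi₀ ih =>
    cases k with
    | zero => simp
    | succ k =>
      have hXs : ∀ i ∈ s, 0 ≤ X i := fun i hi => hX i (mem_insert_of_mem hi)
      have hu := hX i₀ (mem_insert_self _ _)
      have hS : 0 ≤ ∑ i ∈ s, X i := sum_nonneg hXs
      have hbern := pow_add_mul_le_add_pow hS (by linarith) (k + 1) (b := X i₀)
      have hmul := mul_le_mul_of_nonneg_left (ih hXs k) (by positivity : 0 ≤ X i₀ * ((k : ℝ) + 1))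
      rw [sum_powersetCard_succ_insert_prod X hi₀, sum_insert hi₀, Nat.factorial_succ]
      have ihk1 := ih hXs (k + 1)
      rw [Nat.factorial_succ] at ihk1
      push_cast at hbern ihk1 ⊢
      rw [add_comm (X i₀)]
      linarith

theorem mul_log_add_one_sub_log_le_one {c : ℝ} (hc : 0 < c) :
    c * (Real.log (c + 1) - Real.log c) ≤ 1 := by
  have h := Real.log_le_sub_one_of_pos (by positivity : 0 < (c + 1) / c)
  rw [Real.log_div (by positivity) hc.ne'] at h
  calc c * (Real.log (c + 1) - Real.log c) ≤ c * ((c + 1) / c - 1) := by gcongr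
    _ = 1 := by field_simp; ring

/-- The increments of `x ↦ x log x - x` over `[c, c + 1]` are at most `log (c + 1)`. -/
theorem sub_le_log_ascPochhammer_eval {y : ℝ} (hy : 0 < y) (k : ℕ) :
    (y + k) * Real.log (y + k) - y * Real.log y - k ≤
      Real.log ((ascPochhammer ℝ k).eval (y + 1)) := by
  induction k with
  | zero => simp
  | succ k ih =>
    have hstep := mul_log_add_one_sub_log_le_one (by positivity : 0 < y + k)
    rw [ascPochhammer_succ_eval, Real.log_mul (ascPochhammer_pos k _ (by positivity)).ne'
      (by positivity)]
    push_cast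
    rw [show y + 1 + k = y + k + 1 by ring, show y + (k + 1) = y + k + 1 by ring]
    nlinarith

theorem chernoffG_pos {μ δ : ℝ} (hδ : -1 < δ) : 0 < chernoffG μ δ :=
  Real.rpow_pos_of_pos (div_pos (Real.exp_pos δ) (Real.rpow_pos_of_pos (by linarith) _)) μ

theorem log_chernoffG {y : ℝ} (hy : 0 < y) (k : ℕ) :
    Real.log (chernoffG y (k / y)) = k - (y + k) * (Real.log (y + k) - Real.log y) := by
  have h1 : 1 + k / y = (y + k) / y := by field_simp
  rw [chernoffG, Real.log_rpow (div_pos (Real.exp_pos _) (Real.rpow_pos_of_pos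
    (by positivity) _)), Real.log_div (Real.exp_pos _).ne' (Real.rpow_pos_of_pos
    (by positivity) _).ne', Real.log_exp, Real.log_rpow (by positivity), h1,
    Real.log_div (by positivity) hy.ne']
  field_simp

theorem pow_le_chernoffG_mul_ascPochhammer_eval {y : ℝ} (hy : 0 < y) (k : ℕ) :
    y ^ k ≤ chernoffG y (k / y) * (ascPochhammer ℝ k).eval (y + 1) := by
  have hG := chernoffG_pos (μ := y) (δ := k / y) (by linarith [show (0 : ℝ) ≤ k / y by positivity])
  have hP := ascPochhammer_pos k (y + 1) (by positivity)
  rw [← Real.log_le_log_iff (by positivity) (by positivity), Real.log_mul hG.ne' hP.ne',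
    Real.log_pow, log_chernoffG hy]
  linarith [sub_le_log_ascPochhammer_eval hy k]

theorem pow_mul_ascPochhammer_eval_le {b y : ℝ} (hb : 0 ≤ b) (hby : b ≤ y) (k : ℕ) :
    b ^ k * (ascPochhammer ℝ k).eval (y + 1) ≤ y ^ k * (ascPochhammer ℝ k).eval (b + 1) := by
  induction k with
  | zero => simp
  | succ k ih =>
    rw [ascPochhammer_succ_eval, ascPochhammer_succ_eval, pow_succ, pow_succ]
    calc b ^ k * b * ((ascPochhammer ℝ k).eval (y + 1) * (y + 1 + k))
        = b ^ k * (ascPochhammer ℝ k).eval (y + 1) * (b * (y + 1 + k)) := by ring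
      _ ≤ y ^ k * (ascPochhammer ℝ k).eval (b + 1) * (y * (b + 1 + k)) :=
        mul_le_mul ih (by nlinarith)
          (mul_nonneg hb (by linarith [hb.trans hby, (Nat.cast_nonneg k : (0 : ℝ) ≤ k)]))
          (mul_nonneg (pow_nonneg (hb.trans hby) k) (ascPochhammer_pos k _ (by positivity)).le)
      _ = y ^ k * y * ((ascPochhammer ℝ k).eval (b + 1) * (b + 1 + k)) := by ring

theorem pow_le_chernoffG_mul_descPochhammer_eval {b y : ℝ} (hb : 0 ≤ b) (hby : b ≤ y)
    (hy : 0 < y) (k : ℕ) :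
    b ^ k ≤ chernoffG y (k / y) * (descPochhammer ℝ k).eval (b + k) := by
  have hPy := ascPochhammer_pos k (y + 1) (by positivity)
  have hPb := ascPochhammer_pos k (b + 1) (by positivity)
  rw [descPochhammer_eval_eq_ascPochhammer, add_sub_cancel_right]
  refine le_of_mul_le_mul_right ?_ (mul_pos (pow_pos hy k) hPy)
  calc b ^ k * (y ^ k * (ascPochhammer ℝ k).eval (y + 1))
      = (b ^ k * (ascPochhammer ℝ k).eval (y + 1)) * y ^ k := by ring
    _ ≤ (y ^ k * (ascPochhammer ℝ k).eval (b + 1)) * y ^ k := by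
      exact mul_le_mul_of_nonneg_right (pow_mul_ascPochhammer_eval_le hb hby k) (by positivity)
    _ ≤ (chernoffG y (k / y) * (ascPochhammer ℝ k).eval (y + 1)) *
          (ascPochhammer ℝ k).eval (b + 1) * y ^ k := by
      exact mul_le_mul_of_nonneg_right (mul_le_mul_of_nonneg_right
        (pow_le_chernoffG_mul_ascPochhammer_eval hy k) hPb.le) (by positivity)
    _ = _ := by ring

theorem exists_mem_Ico_le_mul_one_sub_pow {G : ℝ} (K : ℕ)
    (hG : G ≤ 1 / (Real.exp 1 * (K + 1))) : ∃ q ∈ Set.Ico (0 : ℝ) 1, G ≤ q * (1 - q) ^ K := by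
  have he : 2 ≤ Real.exp 1 := by linarith [Real.add_one_le_exp 1]
  rcases K.eq_zero_or_pos with rfl | hK
  · refine ⟨1 / 2, ⟨by norm_num, by norm_num⟩, hG.trans ?_⟩
    calc 1 / (Real.exp 1 * ((0 : ℕ) + 1)) ≤ 1 / 2 := by
          simpa using one_div_le_one_div_of_le two_pos he
      _ = 1 / 2 * (1 - 1 / 2) ^ 0 := by norm_num
  · have hK' : (0 : ℝ) < K := by exact_mod_cast hK
    refine ⟨1 / (K + 1), ⟨by positivity, by rw [div_lt_one (by positivity)]; linarith⟩,
      hG.trans ?_⟩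
    have h1q : 1 - 1 / ((K : ℝ) + 1) = (1 + (K : ℝ)⁻¹)⁻¹ := by field_simp; ring
    calc 1 / (Real.exp 1 * (K + 1)) ≤ 1 / ((1 + (K : ℝ)⁻¹) ^ K * (K + 1)) :=
          one_div_le_one_div_of_le (by positivity)
            (mul_le_mul_of_nonneg_right Real.one_add_inv_pow_le_exp (by positivity))
      _ = 1 / (K + 1) * (1 - 1 / (K + 1)) ^ K := by
          rw [h1q, inv_pow]; field_simp

theorem exists_mem_Ico_le_mul_one_sub_pow_of_le_one_div {G : ℝ} {k t : ℕ} (hG0 : 0 < G)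
    (hG : G ≤ 1 / (Real.exp 1 * k * t)) :
    ∃ q ∈ Set.Ico (0 : ℝ) 1, G ≤ q * (1 - q) ^ (k * (t - 1)) := by
  have hkt : 0 < k * t := by
    have h := hG0.trans_le hG
    rw [one_div_pos, mul_assoc] at h
    exact_mod_cast (pos_iff_pos_of_mul_pos h).1 (Real.exp_pos 1)
  refine exists_mem_Ico_le_mul_one_sub_pow _ (hG.trans (one_div_le_one_div_of_le
    (by positivity) ?_))
  rw [mul_assoc]
  refine mul_le_mul_of_nonneg_left ?_ (Real.exp_pos 1).le
  have hk : 1 ≤ k := Nat.pos_of_mul_pos_right hkt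
  have ht : 1 ≤ t := Nat.pos_of_mul_pos_left hkt
  have : k * (t - 1) + 1 ≤ k * t := by
    rw [Nat.mul_sub_one]; have := Nat.le_mul_of_pos_right k ht; omega
  exact_mod_cast this

section ProductWeight

variable {ι M : Type*} [Fintype ι] [DecidableEq ι] {α : ι → Type*} [∀ i, Fintype (α i)]
  [CommSemiring M]

def prodWeight (p : ∀ i, α i → M) (ω : ∀ i, α i) : M := ∏ i, p i (ω i)

theorem sum_prodWeight_mul_prod (p : ∀ i, α i → M) (S : Finset ι)
    (hp : ∀ i ∉ S, ∑ j, p i j = 1) (F : ∀ i, α i → M) :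
    ∑ ω, prodWeight p ω * ∏ i ∈ S, F i (ω i) = ∏ i ∈ S, ∑ j, p i j * F i j := by
  have h := Fintype.prod_sum fun i j => p i j * if i ∈ S then F i j else 1
  simp only [prod_mul_distrib, Fintype.prod_ite_mem] at h
  unfold prodWeight
  rw [← h, ← Fintype.prod_ite_mem S]
  refine Fintype.prod_congr _ _ fun i => ?_
  split_ifs with hi
  · rfl
  · simp [hp i hi]

theorem sum_prodWeight (p : ∀ i, α i → M) (hp : ∀ i, ∑ j, p i j = 1) :
    ∑ ω, prodWeight p ω = 1 := by
  simpa using sum_prodWeight_mul_prod p ∅ (fun i _ => hp i) fun _ _ => 1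

/-- Independence of the coordinates in `S` from those outside `S`. The pair map
`(ω, ω') ↦ (S.piecewise ω ω', S.piecewise ω' ω)` is a weight-preserving involution that trades
`f ω * g ω` for `f ω * g ω'`. -/
theorem sum_prodWeight_mul_mul (p : ∀ i, α i → M) (hp : ∀ i, ∑ j, p i j = 1) (S : Finset ι)
    {f g : (∀ i, α i) → M} (hf : ∀ ω ω', (∀ i ∈ S, ω i = ω' i) → f ω = f ω')
    (hg : ∀ ω ω', (∀ i ∉ S, ω i = ω' i) → g ω = g ω') :
    ∑ ω, prodWeight p ω * (f ω * g ω) =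
      (∑ ω, prodWeight p ω * f ω) * ∑ ω, prodWeight p ω * g ω := by
  let swap : (∀ i, α i) × (∀ i, α i) → (∀ i, α i) × (∀ i, α i) :=
    fun x => (S.piecewise x.1 x.2, S.piecewise x.2 x.1)
  have hswap : Function.Involutive swap := fun x => by
    ext i <;> by_cases hi : i ∈ S <;> simp [swap, hi]
  have hweight : ∀ x, prodWeight p (swap x).1 * prodWeight p (swap x).2 =
      prodWeight p x.1 * prodWeight p x.2 := fun x => by
    simp only [prodWeight, ← prod_mul_distrib]
    refine prod_congr rfl fun i _ => ?_
    by_cases hi : i ∈ S <;> simp [swap, hi, mul_comm]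
  calc ∑ ω, prodWeight p ω * (f ω * g ω)
      = ∑ x : (∀ i, α i) × (∀ i, α i), prodWeight p x.1 * prodWeight p x.2 * (f x.1 * g x.1) := by
        rw [Fintype.sum_prod_type, ← mul_one (∑ ω, _), ← sum_prodWeight p hp, sum_mul_sum]
        exact sum_congr rfl fun _ _ => sum_congr rfl fun _ _ => by ring
    _ = ∑ x : (∀ i, α i) × (∀ i, α i), prodWeight p x.1 * prodWeight p x.2 * (f x.1 * g x.2) := by
        refine Fintype.sum_equiv hswap.toPerm _ _ fun x => ?_
        simp only [Function.Involutive.coe_toPerm, ← hweight x]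
        rw [hf x.1 (swap x).1 fun i hi => by simp [swap, hi],
          hg x.1 (swap x).2 fun i hi => by simp [swap, hi]]
    _ = _ := by
        rw [Fintype.sum_prod_type, sum_mul_sum]
        exact sum_congr rfl fun _ _ => sum_congr rfl fun _ _ => by ring

end ProductWeight

section Avoidance

variable {Ω R : Type*} [Fintype Ω] (w : Ω → ℝ) (E : R → Ω → Prop) [∀ r, DecidablePred (E r)]

def avoidSet (T : Finset R) : Finset Ω := univ.filter fun ω => ∀ r ∈ T, ¬ E r ω

def avoidMass (T : Finset R) : ℝ := ∑ ω ∈ avoidSet E T, w ω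

def badMass (r : R) (T : Finset R) : ℝ := ∑ ω ∈ avoidSet E T with E r ω, w ω

@[simp]
theorem mem_avoidSet {T : Finset R} {ω : Ω} :
    ω ∈ avoidSet E T ↔ ∀ r ∈ T, ¬ E r ω := by
  simp [avoidSet]

theorem avoidMass_nonneg (hw : ∀ ω, 0 ≤ w ω) (T : Finset R) : 0 ≤ avoidMass w E T :=
  sum_nonneg fun ω _ => hw ω

theorem badMass_le_of_forall_ssubset {q : ℝ}
    (hstep : ∀ T, ∀ r ∉ T, (∀ U ⊂ T, ∀ r' ∉ U, badMass w E r' U ≤ q * avoidMass w E U) →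
      badMass w E r T ≤ q * avoidMass w E T) (T : Finset R) :
    ∀ r ∉ T, badMass w E r T ≤ q * avoidMass w E T := by
  induction T using Finset.strongInduction with
  | H T ih => exact fun r hr => hstep T r hr ih

variable [DecidableEq R]

theorem avoidSet_insert (r : R) (T : Finset R) :
    avoidSet E (insert r T) = (avoidSet E T).filter fun ω => ¬ E r ω := by
  ext ω
  simp only [mem_avoidSet, mem_filter, forall_mem_insert]
  tauto

theorem avoidMass_insert_add_badMass (r : R) (T : Finset R) :
    avoidMass w E (insert r T) + badMass w E r T = avoidMass w E T := by
  rw [avoidMass, avoidMass, badMass, avoidSet_insert, sum_filter_not_add_sum_filter]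

theorem one_sub_pow_mul_avoidMass_le {q : ℝ} (hq : q ≤ 1) {W D : Finset R} (hWD : Disjoint W D)
    (H : ∀ U ⊂ W ∪ D, ∀ r ∉ U, badMass w E r U ≤ q * avoidMass w E U) :
    (1 - q) ^ D.card * avoidMass w E W ≤ avoidMass w E (W ∪ D) := by
  induction D using Finset.induction_on with
  | empty => simp
  | insert r D hrD ih =>
    have hrW : r ∉ W ∪ D := by
      simpa [hrD] using disjoint_right.1 hWD (mem_insert_self r D)
    have hsub : W ∪ D ⊂ W ∪ insert r D := by
      rw [union_insert]; exact ssubset_insert hrW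
    have ih := ih (disjoint_insert_right.1 hWD).2 fun U hU => H U (hU.trans hsub)
    have hstep := avoidMass_insert_add_badMass w E r (W ∪ D)
    have hbad := H _ hsub r hrW
    rw [card_insert_of_notMem hrD, pow_succ', mul_assoc, union_insert]
    nlinarith [mul_le_mul_of_nonneg_left ih (sub_nonneg.2 hq)]

theorem exists_forall_not_of_badMass_le [Fintype R] {q : ℝ} (hq : q < 1) (hw : 0 < ∑ ω, w ω)
    (hstep : ∀ T, ∀ r ∉ T, (∀ U ⊂ T, ∀ r' ∉ U, badMass w E r' U ≤ q * avoidMass w E U) →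
      badMass w E r T ≤ q * avoidMass w E T) :
    ∃ ω, ∀ r, ¬ E r ω := by
  have hchain := one_sub_pow_mul_avoidMass_le w E hq.le (disjoint_empty_left univ)
    fun U _ => badMass_le_of_forall_ssubset w E hstep U
  have hpos : 0 < avoidMass w E univ := by
    rw [empty_union] at hchain
    refine lt_of_lt_of_le (mul_pos (pow_pos (by linarith) _) ?_) hchain
    simpa [avoidMass, avoidSet] using hw
  obtain ⟨ω, hω, -⟩ := exists_ne_zero_of_sum_ne_zero hpos.ne'
  exact ⟨ω, by simpa using hω⟩

end Avoidance

theorem prodWeight_nonneg {ι : Type*} [Fintype ι] {α : ι → Type*} {p : ∀ i, α i → ℝ}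
    (hp : ∀ i j, 0 ≤ p i j) (ω : ∀ i, α i) : 0 ≤ prodWeight p ω :=
  prod_nonneg fun i _ => hp i (ω i)

section Rounding

variable {ι R : Type*} {α : ι → Type*} [∀ i, Fintype (α i)]

def blockMean (p : ∀ i, α i → ℝ) (a : R → ∀ i, α i → ℝ) (r : R) (i : ι) : ℝ :=
  ∑ j, p i j * a r i j

noncomputable def rowsMeeting [Fintype R] (a : R → ∀ i, α i → ℝ) (i : ι) : Finset R :=
  univ.filter fun r => ∃ j, a r i j ≠ 0

theorem rowsMeeting_eq_filter [Fintype R] (a : R → ∀ i, α i → ℝ) (i : ι)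
    [DecidablePred fun r => ∃ j, a r i j ≠ 0] :
    rowsMeeting a i = univ.filter fun r => ∃ j, a r i j ≠ 0 := by
  ext r
  simp [rowsMeeting]

variable [Fintype ι]

/-- The paper's `x*_{i,j}` is `p i j` and `A_{r,(i,j)}` is `a r i j`; the rounding chooses
`j ∈ α i` with probability `p i j`, independently over the blocks `i`. -/
structure IsFractionalSolution (p : ∀ i, α i → ℝ) (a : R → ∀ i, α i → ℝ) (b : R → ℝ) : Prop where
  weight_nonneg : ∀ i j, 0 ≤ p i j
  sum_weight : ∀ i, ∑ j, p i j = 1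
  coeff_mem : ∀ r i j, a r i j ∈ Set.Icc (0 : ℝ) 1
  rhs_eq : ∀ r, b r = ∑ i, blockMean p a r i

def rowValue (a : R → ∀ i, α i → ℝ) (r : R) (ω : ∀ i, α i) : ℝ := ∑ i, a r i (ω i)

noncomputable def rowSupport (a : R → ∀ i, α i → ℝ) (r : R) : Finset ι :=
  univ.filter fun i => ∃ j, a r i j ≠ 0

abbrev Overflows (a : R → ∀ i, α i → ℝ) (b : R → ℝ) (k : ℕ) (r : R) (ω : ∀ i, α i) : Prop :=
  b r + k < rowValue a r ω

variable {p : ∀ i, α i → ℝ} {a : R → ∀ i, α i → ℝ} {b : R → ℝ} {k d : ℕ} {q : ℝ}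

theorem blockMean_nonneg (hfrac : IsFractionalSolution p a b) (r : R) (i : ι) :
    0 ≤ blockMean p a r i :=
  sum_nonneg fun j _ => mul_nonneg (hfrac.weight_nonneg i j) (hfrac.coeff_mem r i j).1

theorem IsFractionalSolution.rhs_nonneg (hfrac : IsFractionalSolution p a b) (r : R) : 0 ≤ b r :=
  hfrac.rhs_eq r ▸ sum_nonneg fun i _ => blockMean_nonneg hfrac r i

theorem rowValue_eq_sum_rowSupport (r : R) (ω : ∀ i, α i) :
    rowValue a r ω = ∑ i ∈ rowSupport a r, a r i (ω i) :=
  (sum_filter_of_ne fun i _ h => ⟨ω i, h⟩).symm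

theorem descPochhammer_mul_badMass_le [DecidableEq ι] (hfrac : IsFractionalSolution p a b)
    (r : R) (T : Finset R) :
    (descPochhammer ℝ k).eval (b r + k) * badMass (prodWeight p) (Overflows a b k) r T ≤
      k ! * ∑ S ∈ (rowSupport a r).powersetCard k,
        ∑ ω ∈ avoidSet (Overflows a b k) T, prodWeight p ω * ∏ i ∈ S, a r i (ω i) := by
  have hb := hfrac.rhs_nonneg r
  rw [badMass, mul_sum]
  calc ∑ ω ∈ avoidSet (Overflows a b k) T with Overflows a b k r ω,
        (descPochhammer ℝ k).eval (b r + k) * prodWeight p ω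
      ≤ ∑ ω ∈ avoidSet (Overflows a b k) T with Overflows a b k r ω,
          prodWeight p ω * (k ! * ∑ S ∈ (rowSupport a r).powersetCard k, ∏ i ∈ S, a r i (ω i)) :=
        sum_le_sum fun ω hω => by
          rw [mul_comm]
          refine mul_le_mul_of_nonneg_left ?_ (prodWeight_nonneg hfrac.weight_nonneg ω)
          refine descPochhammer_eval_le_factorial_mul_esymm _ (fun i _ => hfrac.coeff_mem r i _)
            (by linarith) ?_
          rw [← rowValue_eq_sum_rowSupport]
          exact (mem_filter.1 hω).2.le
    _ ≤ ∑ ω ∈ avoidSet (Overflows a b k) T,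
          prodWeight p ω * (k ! * ∑ S ∈ (rowSupport a r).powersetCard k, ∏ i ∈ S, a r i (ω i)) :=
        sum_le_sum_of_subset_of_nonneg (filter_subset _ _) fun ω _ _ =>
          mul_nonneg (prodWeight_nonneg hfrac.weight_nonneg ω) (mul_nonneg (by positivity)
            (sum_nonneg fun S _ => prod_nonneg fun i _ => (hfrac.coeff_mem r i _).1))
    _ = _ := by
        simp only [mul_sum]
        rw [sum_comm]
        exact sum_congr rfl fun _ _ => sum_congr rfl fun _ _ => by ring

theorem card_inter_biUnion_rowsMeeting_le [Fintype R] [DecidableEq R]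
    (hrows : ∀ i, (rowsMeeting a i).card ≤ d + 1)
    {r : R} {T : Finset R} (hr : r ∉ T) {S : Finset ι} (hS : S ⊆ rowSupport a r) :
    (T ∩ S.biUnion (rowsMeeting a)).card ≤ S.card * d := by
  calc (T ∩ S.biUnion (rowsMeeting a)).card
      ≤ (S.biUnion fun i => (rowsMeeting a i).erase r).card := by
        refine card_le_card fun r' h => ?_
        obtain ⟨hr'T, hr'⟩ := mem_inter.1 h
        obtain ⟨i, hi, hr'i⟩ := mem_biUnion.1 hr'
        exact mem_biUnion.2 ⟨i, hi, mem_erase.2 ⟨ne_of_mem_of_not_mem hr'T hr, hr'i⟩⟩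
    _ ≤ ∑ i ∈ S, ((rowsMeeting a i).erase r).card := card_biUnion_le
    _ ≤ ∑ _i ∈ S, d := sum_le_sum fun i hi => by
        have hri : r ∈ rowsMeeting a i := by simpa [rowsMeeting, rowSupport] using hS hi
        have := hrows i
        rw [card_erase_of_mem hri]
        omega
    _ = S.card * d := by rw [sum_const, smul_eq_mul]

theorem sum_avoid_mul_prod_eq [DecidableEq ι] [Fintype R] [DecidableEq R]
    (hfrac : IsFractionalSolution p a b) {W : Finset R} {S : Finset ι}
    (hWS : Disjoint W (S.biUnion (rowsMeeting a))) (r : R) :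
    ∑ ω ∈ avoidSet (Overflows a b k) W, prodWeight p ω * ∏ i ∈ S, a r i (ω i) =
      (∏ i ∈ S, blockMean p a r i) * avoidMass (prodWeight p) (Overflows a b k) W := by
  have hrow : ∀ ω ω' : ∀ i, α i, (∀ i ∉ S, ω i = ω' i) → ∀ r' ∈ W,
      rowValue a r' ω = rowValue a r' ω' := fun ω ω' h r' hr' =>
    sum_congr rfl fun i _ => by
      by_cases hi : i ∈ S
      · have : r' ∉ rowsMeeting a i := fun h => disjoint_left.1 hWS hr' (mem_biUnion.2 ⟨i, hi, h⟩)
        simp only [rowsMeeting, mem_filter, mem_univ, true_and, not_exists, not_not] at this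
        rw [this, this]
      · rw [h i hi]
  classical
  have hind := sum_prodWeight_mul_mul p hfrac.sum_weight S
    (f := fun ω => ∏ i ∈ S, a r i (ω i))
    (g := fun ω => if ω ∈ avoidSet (Overflows a b k) W then 1 else 0)
    (fun ω ω' h => prod_congr rfl fun i hi => by rw [h i hi])
    (fun ω ω' h => by
      have : ω ∈ avoidSet (Overflows a b k) W ↔ ω' ∈ avoidSet (Overflows a b k) W := by
        simp only [mem_avoidSet]
        exact forall₂_congr fun r' hr' => by rw [Overflows, Overflows, hrow ω ω' h r' hr']
      simp only [this])
  rw [sum_prodWeight_mul_prod p S (fun i _ => hfrac.sum_weight i)] at hind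
  simp only [mul_ite, mul_one, mul_zero, sum_ite_mem, univ_inter] at hind
  exact hind

theorem one_sub_pow_mul_sum_avoidSet_le [DecidableEq ι] [Fintype R] [DecidableEq R]
    (hfrac : IsFractionalSolution p a b) (hq : q ∈ Set.Ico (0 : ℝ) 1)
    (hrows : ∀ i, (rowsMeeting a i).card ≤ d + 1) {r : R} {T : Finset R} (hr : r ∉ T)
    (H : ∀ U ⊂ T, ∀ r' ∉ U, badMass (prodWeight p) (Overflows a b k) r' U ≤
      q * avoidMass (prodWeight p) (Overflows a b k) U)
    {S : Finset ι} (hS : S ∈ (rowSupport a r).powersetCard k) :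
    (1 - q) ^ (k * d) * ∑ ω ∈ avoidSet (Overflows a b k) T, prodWeight p ω * ∏ i ∈ S, a r i (ω i) ≤
      (∏ i ∈ S, blockMean p a r i) * avoidMass (prodWeight p) (Overflows a b k) T := by
  obtain ⟨hSr, hSk⟩ := mem_powersetCard.1 hS
  set D := T ∩ S.biUnion (rowsMeeting a)
  have hD : D.card ≤ k * d := hSk ▸ card_inter_biUnion_rowsMeeting_le hrows hr hSr
  have hDT : T \ D ∪ D = T := sdiff_union_of_subset inter_subset_left
  have hchain := one_sub_pow_mul_avoidMass_le (prodWeight p) (Overflows a b k) hq.2.le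
    sdiff_disjoint (hDT ▸ H)
  rw [hDT] at hchain
  have hWS : Disjoint (T \ D) (S.biUnion (rowsMeeting a)) :=
    disjoint_left.2 fun r' hr' h => (mem_sdiff.1 hr').2 (mem_inter.2 ⟨(mem_sdiff.1 hr').1, h⟩)
  have hmono : ∑ ω ∈ avoidSet (Overflows a b k) T, prodWeight p ω * ∏ i ∈ S, a r i (ω i) ≤
      ∑ ω ∈ avoidSet (Overflows a b k) (T \ D), prodWeight p ω * ∏ i ∈ S, a r i (ω i) :=
    sum_le_sum_of_subset_of_nonneg
      (fun ω hω => (mem_avoidSet _).2 fun r' hr' => (mem_avoidSet _).1 hω r' (mem_sdiff.1 hr').1)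
      fun ω _ _ => mul_nonneg (prodWeight_nonneg hfrac.weight_nonneg ω)
        (prod_nonneg fun i _ => (hfrac.coeff_mem r i _).1)
  calc (1 - q) ^ (k * d) * ∑ ω ∈ avoidSet (Overflows a b k) T, prodWeight p ω * ∏ i ∈ S, a r i (ω i)
      ≤ (1 - q) ^ D.card *
          ∑ ω ∈ avoidSet (Overflows a b k) (T \ D), prodWeight p ω * ∏ i ∈ S, a r i (ω i) :=
        mul_le_mul (pow_le_pow_of_le_one (by linarith [hq.2]) (by linarith [hq.1]) hD) hmono
          (sum_nonneg fun ω _ => mul_nonneg (prodWeight_nonneg hfrac.weight_nonneg ω)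
            (prod_nonneg fun i _ => (hfrac.coeff_mem r i _).1)) (pow_nonneg (by linarith [hq.2]) _)
    _ = (∏ i ∈ S, blockMean p a r i) *
          ((1 - q) ^ D.card * avoidMass (prodWeight p) (Overflows a b k) (T \ D)) := by
        rw [sum_avoid_mul_prod_eq hfrac hWS]; ring
    _ ≤ (∏ i ∈ S, blockMean p a r i) * avoidMass (prodWeight p) (Overflows a b k) T :=
        mul_le_mul_of_nonneg_left hchain (prod_nonneg fun i _ => blockMean_nonneg hfrac r i)

theorem factorial_mul_sum_prod_blockMean_le [DecidableEq ι] (hfrac : IsFractionalSolution p a b)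
    (r : R) (k : ℕ) :
    k ! * ∑ S ∈ (rowSupport a r).powersetCard k, ∏ i ∈ S, blockMean p a r i ≤ b r ^ k := by
  refine (factorial_mul_esymm_le_pow _ (fun i _ => blockMean_nonneg hfrac r i) k).trans ?_
  refine pow_le_pow_left₀ (sum_nonneg fun i _ => blockMean_nonneg hfrac r i) ?_ k
  rw [hfrac.rhs_eq r]
  exact sum_le_sum_of_subset_of_nonneg (subset_univ _) fun i _ _ => blockMean_nonneg hfrac r i

theorem badMass_overflows_le [DecidableEq ι] [Fintype R] [DecidableEq R]
    (hfrac : IsFractionalSolution p a b) (hq : q ∈ Set.Ico (0 : ℝ) 1)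
    (hrows : ∀ i, (rowsMeeting a i).card ≤ d + 1)
    (hkey : ∀ r, b r ^ k ≤ q * (1 - q) ^ (k * d) * (descPochhammer ℝ k).eval (b r + k))
    {r : R} {T : Finset R} (hr : r ∉ T)
    (H : ∀ U ⊂ T, ∀ r' ∉ U, badMass (prodWeight p) (Overflows a b k) r' U ≤
      q * avoidMass (prodWeight p) (Overflows a b k) U) :
    badMass (prodWeight p) (Overflows a b k) r T ≤
      q * avoidMass (prodWeight p) (Overflows a b k) T := by
  have hC : 0 < (descPochhammer ℝ k).eval (b r + k) :=
    descPochhammer_pos (by linarith [hfrac.rhs_nonneg r])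
  have hpow : 0 < (1 - q) ^ (k * d) := pow_pos (by linarith [hq.2]) _
  have havoid := avoidMass_nonneg _ (Overflows a b k) (prodWeight_nonneg hfrac.weight_nonneg) T
  refine le_of_mul_le_mul_left ?_ (mul_pos hpow hC)
  calc (1 - q) ^ (k * d) * (descPochhammer ℝ k).eval (b r + k) *
        badMass (prodWeight p) (Overflows a b k) r T
      ≤ (1 - q) ^ (k * d) * (k ! * ∑ S ∈ (rowSupport a r).powersetCard k,
          ∑ ω ∈ avoidSet (Overflows a b k) T, prodWeight p ω * ∏ i ∈ S, a r i (ω i)) := by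
        rw [mul_assoc]
        exact mul_le_mul_of_nonneg_left (descPochhammer_mul_badMass_le hfrac r T) hpow.le
    _ = k ! * ∑ S ∈ (rowSupport a r).powersetCard k, (1 - q) ^ (k * d) *
          ∑ ω ∈ avoidSet (Overflows a b k) T, prodWeight p ω * ∏ i ∈ S, a r i (ω i) := by
        rw [mul_sum, mul_sum, mul_sum]; exact sum_congr rfl fun _ _ => by ring
    _ ≤ k ! * ∑ S ∈ (rowSupport a r).powersetCard k,
          (∏ i ∈ S, blockMean p a r i) * avoidMass (prodWeight p) (Overflows a b k) T :=
        mul_le_mul_of_nonneg_left (sum_le_sum fun S hS =>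
          one_sub_pow_mul_sum_avoidSet_le hfrac hq hrows hr H hS) (by positivity)
    _ ≤ b r ^ k * avoidMass (prodWeight p) (Overflows a b k) T := by
        rw [← sum_mul, ← mul_assoc]
        exact mul_le_mul_of_nonneg_right (factorial_mul_sum_prod_blockMean_le hfrac r k) havoid
    _ ≤ q * (1 - q) ^ (k * d) * (descPochhammer ℝ k).eval (b r + k) *
          avoidMass (prodWeight p) (Overflows a b k) T :=
        mul_le_mul_of_nonneg_right (hkey r) havoid
    _ = _ := by ring

theorem exists_forall_rowValue_le [DecidableEq ι] [Fintype R] [DecidableEq R]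
    (hfrac : IsFractionalSolution p a b) (hq : q ∈ Set.Ico (0 : ℝ) 1)
    (hrows : ∀ i, (rowsMeeting a i).card ≤ d + 1)
    (hkey : ∀ r, b r ^ k ≤ q * (1 - q) ^ (k * d) * (descPochhammer ℝ k).eval (b r + k)) :
    ∃ ω : ∀ i, α i, ∀ r, rowValue a r ω ≤ b r + k := by
  obtain ⟨ω, hω⟩ := exists_forall_not_of_badMass_le (prodWeight p) (Overflows a b k) hq.2
    (by rw [sum_prodWeight p hfrac.sum_weight]; exact one_pos)
    fun T r hr H => badMass_overflows_le hfrac hq hrows hkey hr H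
  exact ⟨ω, fun r => not_lt.1 (hω r)⟩

end Rounding

theorem sum_sigma_mul_ite_eq {ι M : Type*} [Fintype ι] [Semiring M] {α : ι → Type*}
    [∀ i, Fintype (α i)] [∀ i, DecidableEq (α i)] (f : (Σ i, α i) → M) (ω : ∀ i, α i) :
    ∑ j, f j * (if ω j.1 = j.2 then 1 else 0) = ∑ i, f ⟨i, ω i⟩ := by
  rw [Fintype.sum_sigma]
  exact sum_congr rfl fun i _ => by simp [mul_ite]

theorem mip_rounding_via_extended_LLL_general
    (n m : ℕ) (ℓ : Fin n → ℕ)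
    (A : Fin m → (Σ i : Fin n, Fin (ℓ i)) → ℝ)
    (hA : ∀ r j, A r j ∈ Set.Icc (0 : ℝ) 1)
    (x : (Σ i : Fin n, Fin (ℓ i)) → ℝ)
    (hx : ∀ j, x j ∈ Set.Icc (0 : ℝ) 1)
    (hblock : ∀ i : Fin n, ∑ j : Fin (ℓ i), x ⟨i, j⟩ = 1)
    (b : Fin m → ℝ) (hb : ∀ r, b r = ∑ j, A r j * x j)
    (hbpos : ∀ r, 0 < b r)
    (ystar : ℝ) (hystar : IsGreatest (Set.range b) ystar)
    (t : ℕ)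
    (ht : t = Finset.univ.sup (fun i : Fin n =>
      (Finset.univ.filter (fun r : Fin m => ∃ j : Fin (ℓ i), A r ⟨i, j⟩ ≠ 0)).card))
    (k : ℕ)
    (hG : chernoffG ystar (k / ystar) ≤ 1 / (Real.exp 1 * k * t)) :
    ∃ z : (Σ i : Fin n, Fin (ℓ i)) → ℝ,
      (∀ j, z j = 0 ∨ z j = 1) ∧
      (∀ i : Fin n, ∑ j : Fin (ℓ i), z ⟨i, j⟩ = 1) ∧
      (∀ r, ∑ j, A r j * z j ≤ b r + k) := by
  obtain ⟨r₀, hr₀⟩ := hystar.1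
  have hy : 0 < ystar := hr₀ ▸ hbpos r₀
  obtain ⟨q, hq, hqG⟩ := exists_mem_Ico_le_mul_one_sub_pow_of_le_one_div
    (chernoffG_pos (by linarith [show (0 : ℝ) ≤ k / ystar by positivity])) hG
  have hfrac : IsFractionalSolution (fun i j => x ⟨i, j⟩) (fun r i j => A r ⟨i, j⟩) b :=
    ⟨fun i j => (hx _).1, hblock, fun r i j => hA r _, fun r => by
      simp only [hb r, Fintype.sum_sigma, blockMean, mul_comm]⟩
  have hrows : ∀ i, (rowsMeeting (fun r i j => A r ⟨i, j⟩) i).card ≤ t - 1 + 1 := fun i => by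
    rw [rowsMeeting_eq_filter]
    have := ht ▸ le_sup (f := fun i : Fin n => (univ.filter fun r : Fin m =>
      ∃ j : Fin (ℓ i), A r ⟨i, j⟩ ≠ 0).card) (mem_univ i)
    omega
  obtain ⟨ω, hω⟩ := exists_forall_rowValue_le hfrac hq hrows
    fun r => (pow_le_chernoffG_mul_descPochhammer_eval (hbpos r).le (hystar.2 ⟨r, rfl⟩) hy k).trans
      (mul_le_mul_of_nonneg_right hqG (descPochhammer_nonneg (by linarith [hbpos r])))
  refine ⟨fun j => if ω j.1 = j.2 then 1 else 0, fun j => by by_cases h : ω j.1 = j.2 <;> simp [h],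
    fun i => by simp, fun r => ?_⟩
  exact (sum_sigma_mul_ite_eq _ ω).trans_le (hω r)

/-- Consider an MIP with matrix `A ∈ [0,1]^{m×N}` (columns indexed by the
pairs `(i,j)`, `i ∈ [n]`, `j ∈ [ℓ_i]`) and a fractional solution `x*` whose block sums are 1.
Let `b = Ax*` with `b_r > 0` for all `r`, `y* = max_r b_r`, and let `t` be the maximum over
`i ∈ [n]` of the number of rows of `A` having a nonzero coefficient on some column `(i,j)`.
Then for every positive integer `k` with `G(y*, k/y*) ≤ 1/(e·k·t)` there is a 0-1 vector `z`
with exactly one 1 per block such that `(Az)_r ≤ b_r + k` for every `r`. -/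
theorem mip_rounding_via_extended_LLL
    (n m : ℕ) (ℓ : Fin n → ℕ) (hℓ : ∀ i, 0 < ℓ i)
    (A : Fin m → (Σ i : Fin n, Fin (ℓ i)) → ℝ)
    (hA : ∀ r j, A r j ∈ Set.Icc (0 : ℝ) 1)
    (x : (Σ i : Fin n, Fin (ℓ i)) → ℝ)
    (hx : ∀ j, x j ∈ Set.Icc (0 : ℝ) 1)
    (hblock : ∀ i : Fin n, ∑ j : Fin (ℓ i), x ⟨i, j⟩ = 1)
    (b : Fin m → ℝ) (hb : ∀ r, b r = ∑ j, A r j * x j)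
    (hbpos : ∀ r, 0 < b r)
    (ystar : ℝ) (hystar : IsGreatest (Set.range b) ystar)
    (t : ℕ)
    (ht : t = Finset.univ.sup (fun i : Fin n =>
      (Finset.univ.filter (fun r : Fin m => ∃ j : Fin (ℓ i), A r ⟨i, j⟩ ≠ 0)).card))
    (k : ℕ) (hk : 0 < k)
    (hG : chernoffG ystar (k / ystar) ≤ 1 / (Real.exp 1 * k * t)) :
    ∃ z : (Σ i : Fin n, Fin (ℓ i)) → ℝ,
      (∀ j, z j = 0 ∨ z j = 1) ∧
      (∀ i : Fin n, ∑ j : Fin (ℓ i), z ⟨i, j⟩ = 1) ∧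
      (∀ r, ∑ j, A r j * z j ≤ b r + k) :=
  mip_rounding_via_extended_LLL_general n m ℓ A hA x hx hblock b hb hbpos ystar hystar t ht k hG
end

section
/- Consider a CIP with a fractional solution x* ∈ ℝ_{≥0}^n with Ax* ≥ b, a parameter α > 1, and general randomized rounding with parameter p ∈ [0,1]^n; let E_i ≡ ((Az)_i < b_i) for i ∈ [m]. Suppose Pr(⋀_{i=1}^m ¬E_i) > 0. Then for every q ≥ 1 and all column indices 1 ≤ j₁ < j₂ < … < j_q ≤ n: Pr(X_{j₁} = X_{j₂} = … = X_{j_q} = 1 | ⋀_{i=1}^m ¬E_i) ≤ (Π_{t=1}^q p_{j_t}) / (Π_{i ∈ R(j₁, …, j_q)} (1 − Pr(E_i))). -/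
/-!
Write `S = ⋂ᵢ ¬Eᵢ`, `F = {X_{j₁} = ⋯ = X_{j_q} = 1}` and `G = ⋂_{i ∉ R} ¬Eᵢ`, where `R` is the set
of rows meeting the columns `j_t`. Each `¬Eᵢ` is an increasing event of the bit vector `X`, so
Harris' inequality (the FKG inequality on the Boolean cube weighted by the product Bernoulli law)
gives `Pr(S) ≥ Pr(G) · ∏_{i ∈ R} Pr(¬Eᵢ)`. The rows outside `R` do not see the columns `j_t`, so
`F` and `G` are independent and `Pr(F ∩ S) ≤ Pr(F ∩ G) = (∏ₜ p_{j_t}) · Pr(G)`. Dividing the two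
bounds gives the claim.
-/

open MeasureTheory ProbabilityTheory Finset

lemma IsUpperSet.monotone_indicator_one {α : Type*} [Preorder α] {s : Set α}
    (hs : IsUpperSet s) : Monotone (s.indicator (1 : α → ℝ)) := by
  intro a b hab
  by_cases ha : a ∈ s
  · simp [ha, hs hab ha]
  · exact (Set.indicator_of_notMem ha _).trans_le (Set.indicator_nonneg (by simp) b)

section BoolCube

variable {ι : Type*} [Fintype ι] (p : ι → ℝ)

noncomputable def cubeWeight (a : ι → Bool) : ℝ :=
  ∏ j, if a j then p j else 1 - p j

variable {p}

lemma cubeWeight_nonneg (hp : ∀ j, p j ∈ Set.Icc (0 : ℝ) 1) (a : ι → Bool) :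
    0 ≤ cubeWeight p a :=
  prod_nonneg fun j _ => by
    obtain ⟨h0, h1⟩ := hp j
    split_ifs <;> linarith

lemma cubeWeight_inf_mul_sup (a b : ι → Bool) :
    cubeWeight p (a ⊓ b) * cubeWeight p (a ⊔ b) = cubeWeight p a * cubeWeight p b := by
  simp only [cubeWeight, ← prod_mul_distrib]
  refine prod_congr rfl fun j _ => ?_
  simp only [Pi.inf_apply, Pi.sup_apply]
  rcases Bool.eq_false_or_eq_true (a j) with ha | ha <;>
    rcases Bool.eq_false_or_eq_true (b j) with hb | hb <;> simp [ha, hb, mul_comm]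

variable [DecidableEq ι]

lemma sum_cubeWeight : ∑ a, cubeWeight p a = 1 := by
  simp only [cubeWeight]
  rw [← Fintype.prod_sum fun j (v : Bool) => if v then p j else 1 - p j]
  simp

variable (p) in
noncomputable def cubeProb (s : Set (ι → Bool)) : ℝ :=
  ∑ a, s.indicator (cubeWeight p) a

lemma cubeProb_nonneg (hp : ∀ j, p j ∈ Set.Icc (0 : ℝ) 1) (s : Set (ι → Bool)) :
    0 ≤ cubeProb p s :=
  sum_nonneg fun a _ => Set.indicator_nonneg (fun a _ => cubeWeight_nonneg hp a) a

lemma cubeProb_eq_sum_mul_indicator (s : Set (ι → Bool)) :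
    cubeProb p s = ∑ a, cubeWeight p a * s.indicator 1 a := by
  refine sum_congr rfl fun a _ => ?_
  by_cases h : a ∈ s <;> simp [h]

lemma cubeProb_mul_le_cubeProb_inter (hp : ∀ j, p j ∈ Set.Icc (0 : ℝ) 1)
    {s t : Set (ι → Bool)} (hs : IsUpperSet s) (ht : IsUpperSet t) :
    cubeProb p s * cubeProb p t ≤ cubeProb p (s ∩ t) := by
  have := fkg _ _ _ (fun a => cubeWeight_nonneg hp a) (Set.indicator_nonneg (by simp))
    (Set.indicator_nonneg (by simp)) hs.monotone_indicator_one ht.monotone_indicator_one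
    fun a b => (cubeWeight_inf_mul_sup a b).ge
  simpa only [cubeProb_eq_sum_mul_indicator, Set.inter_indicator_one, sum_cubeWeight, one_mul,
    Pi.mul_apply] using this

lemma cubeProb_mul_prod_le {κ : Type*} (hp : ∀ j, p j ∈ Set.Icc (0 : ℝ) 1)
    {V : Set (ι → Bool)} {U : κ → Set (ι → Bool)} (hV : IsUpperSet V)
    (hU : ∀ i, IsUpperSet (U i)) (K : Finset κ) :
    cubeProb p V * ∏ i ∈ K, cubeProb p (U i) ≤ cubeProb p (V ∩ ⋂ i ∈ K, U i) := by
  classical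
  induction K using Finset.induction_on with
  | empty => simp
  | insert k K hk ih =>
    have hVK : IsUpperSet (V ∩ ⋂ i ∈ K, U i) := hV.inter (isUpperSet_iInter₂ fun i _ => hU i)
    calc cubeProb p V * ∏ i ∈ insert k K, cubeProb p (U i)
        = (cubeProb p V * ∏ i ∈ K, cubeProb p (U i)) * cubeProb p (U k) := by
          rw [prod_insert hk]; ring
      _ ≤ cubeProb p (V ∩ ⋂ i ∈ K, U i) * cubeProb p (U k) :=
          mul_le_mul_of_nonneg_right ih (cubeProb_nonneg hp _)
      _ ≤ cubeProb p ((V ∩ ⋂ i ∈ K, U i) ∩ U k) := cubeProb_mul_le_cubeProb_inter hp hVK (hU k)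
      _ = cubeProb p (V ∩ ⋂ i ∈ insert k K, U i) := by
          rw [set_biInter_insert, Set.inter_comm (U k), Set.inter_assoc]

end BoolCube

lemma toReal_cond_le_div {Ω : Type*} [MeasurableSpace Ω] {μ : Measure Ω} [IsFiniteMeasure μ]
    {S G F : Set Ω} {c : ℝ} (hS : MeasurableSet S) (hSG : S ⊆ G)
    (hFG : μ (F ∩ G) = μ F * μ G) (hc : 0 < c) (hGc : (μ G).toReal * c ≤ (μ S).toReal) :
    (μ[|S] F).toReal ≤ (μ F).toReal / c := by
  rw [cond_apply hS, ENNReal.toReal_mul, ENNReal.toReal_inv, inv_mul_eq_div]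
  rcases (ENNReal.toReal_nonneg (a := μ S)).eq_or_lt with hS0 | hS0
  · rw [← hS0, div_zero]
    positivity
  have hSF : (μ (S ∩ F)).toReal ≤ (μ F).toReal * (μ G).toReal := by
    rw [← ENNReal.toReal_mul, ← hFG, Set.inter_comm]
    exact ENNReal.toReal_mono (measure_ne_top _ _)
      (measure_mono (Set.inter_subset_inter_right _ hSG))
  rw [div_le_div_iff₀ hS0 hc]
  calc (μ (S ∩ F)).toReal * c ≤ (μ F).toReal * (μ G).toReal * c := by gcongr
    _ ≤ (μ F).toReal * (μ S).toReal := by rw [mul_assoc]; gcongr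

lemma measurableSet_pattern_mem_iSup_comap {ι Ω : Type*} [Finite ι] {Y : ι → Ω → Bool}
    {S : Set ι} {s : Set (ι → Bool)}
    (hs : DependsOn (· ∈ s) S) :
    MeasurableSet[⨆ j ∈ S, MeasurableSpace.comap (Y j) inferInstance] {ω | (Y · ω) ∈ s} := by
  classical
  set mS := ⨆ j ∈ S, MeasurableSpace.comap (Y j) inferInstance
  -- Freezing the coordinates outside `S` to `false` does not change membership in `s`.
  have hYS : Measurable[mS] fun ω j => if j ∈ S then Y j ω else false := by
    refine @measurable_pi_lambda _ _ _ mS _ _ fun j => ?_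
    by_cases hj : j ∈ S
    · simp only [hj, if_true]
      exact (comap_measurable (Y j)).mono
        (le_iSup₂ (f := fun j (_ : j ∈ S) => MeasurableSpace.comap (Y j) inferInstance) j hj) le_rfl
    · simp only [hj, if_false]
      exact measurable_const
  convert hYS (Set.toFinite s).measurableSet using 1
  ext ω
  exact (hs fun j hj => by simp [hj]).to_iff

section BitPatterns

variable {ι Ω : Type*} [MeasurableSpace Ω] {μ : Measure Ω} {Y : ι → Ω → Bool}

lemma toReal_measure_forall_eq_true {κ : Type*} [Fintype κ] (hind : iIndepFun Y μ)
    {p : ι → ℝ} (hp : ∀ j, (μ {ω | Y j ω = true}).toReal = p j) {J : κ → ι}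
    (hJ : Function.Injective J) :
    (μ {ω | ∀ k, Y (J k) ω = true}).toReal = ∏ k, p (J k) := by
  have h := (hind.precomp hJ).measure_inter_preimage_eq_mul univ (sets := fun _ => {true})
    fun _ _ => measurableSet_singleton _
  simp only [mem_univ, Set.iInter_true] at h
  rw [show {ω | ∀ k, Y (J k) ω = true} = ⋂ k, Y (J k) ⁻¹' {true} by ext; simp, h,
    ENNReal.toReal_prod]
  exact prod_congr rfl fun k _ => hp (J k)

variable [Fintype ι]

lemma measurableSet_pattern_mem (hY : ∀ j, Measurable (Y j)) (s : Set (ι → Bool)) :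
    MeasurableSet {ω | (Y · ω) ∈ s} :=
  measurable_pi_lambda _ hY (Set.toFinite s).measurableSet

lemma toReal_measure_pattern_eq (hY : ∀ j, Measurable (Y j)) (hind : iIndepFun Y μ)
    [IsProbabilityMeasure μ] {p : ι → ℝ} (hp : ∀ j, (μ {ω | Y j ω = true}).toReal = p j)
    (a : ι → Bool) : (μ {ω | (Y · ω) = a}).toReal = cubeWeight p a := by
  have hset : {ω | (Y · ω) = a} = ⋂ j ∈ (univ : Finset ι), Y j ⁻¹' {a j} := by
    ext ω; simp [funext_iff]
  rw [hset, hind.measure_inter_preimage_eq_mul univ fun j _ => measurableSet_singleton _,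
    ENNReal.toReal_prod]
  refine prod_congr rfl fun j _ => ?_
  rcases Bool.eq_false_or_eq_true (a j) with ha | ha
  · rw [ha, if_pos rfl]
    exact hp j
  · have hcompl : Y j ⁻¹' {false} = (Y j ⁻¹' {true})ᶜ := by ext ω; simp
    rw [ha, if_neg Bool.false_ne_true, ← hp j, hcompl]
    exact probReal_compl_eq_one_sub (μ := μ) (hY j (measurableSet_singleton true))

lemma toReal_measure_pattern_mem [DecidableEq ι] (hY : ∀ j, Measurable (Y j))
    (hind : iIndepFun Y μ) [IsProbabilityMeasure μ] {p : ι → ℝ}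
    (hp : ∀ j, (μ {ω | Y j ω = true}).toReal = p j) (s : Set (ι → Bool)) :
    (μ {ω | (Y · ω) ∈ s}).toReal = cubeProb p s := by
  classical
  have hsum := sum_measure_preimage_singleton (μ := μ) (f := fun ω j => Y j ω)
    (univ.filter (· ∈ s)) fun a _ => measurableSet_pattern_mem hY {a}
  rw [coe_filter_univ, Set.ofPred_mem_eq] at hsum
  rw [show {ω | (Y · ω) ∈ s} = (fun ω j => Y j ω) ⁻¹' s from rfl, ← hsum,
    ENNReal.toReal_sum fun a _ => measure_ne_top _ _, sum_filter, cubeProb]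
  refine sum_congr rfl fun a _ => ?_
  rw [Set.indicator_apply, ← toReal_measure_pattern_eq hY hind hp a]
  rfl

lemma toReal_measure_pattern_mul_prod_le {κ : Type*}
    (hY : ∀ j, Measurable (Y j)) (hind : iIndepFun Y μ) [IsProbabilityMeasure μ]
    {V : Set (ι → Bool)} {U : κ → Set (ι → Bool)} (hV : IsUpperSet V)
    (hU : ∀ i, IsUpperSet (U i)) (K : Finset κ) :
    (μ {ω | (Y · ω) ∈ V}).toReal * ∏ i ∈ K, (μ {ω | (Y · ω) ∈ U i}).toReal ≤
      (μ {ω | (Y · ω) ∈ V ∩ ⋂ i ∈ K, U i}).toReal := by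
  classical
  have hp (j : ι) : (μ {ω | Y j ω = true}).toReal ∈ Set.Icc (0 : ℝ) 1 :=
    ⟨ENNReal.toReal_nonneg, measureReal_le_one⟩
  simp only [toReal_measure_pattern_mem hY hind fun _ => rfl]
  exact cubeProb_mul_prod_le hp hV hU K

lemma measure_pattern_mem_inter_eq_mul (hY : ∀ j, Measurable (Y j)) (hind : iIndepFun Y μ)
    {S T : Set ι} (hST : Disjoint S T) {s t : Set (ι → Bool)} (hs : DependsOn (· ∈ s) S)
    (ht : DependsOn (· ∈ t) T) :
    μ {ω | (Y · ω) ∈ s ∩ t} = μ {ω | (Y · ω) ∈ s} * μ {ω | (Y · ω) ∈ t} :=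
  (Indep_iff _ _ _).1 (indep_iSup_of_disjoint (fun j => (hY j).comap_le)
    ((iIndepFun_iff_iIndep _ _ _).1 hind) hST) _ _
    (measurableSet_pattern_mem_iSup_comap hs) (measurableSet_pattern_mem_iSup_comap ht)

theorem toReal_cond_forall_eq_true_le {κ ρ : Type*} [Fintype κ]
    (hY : ∀ j, Measurable (Y j)) (hind : iIndepFun Y μ) [IsProbabilityMeasure μ] {p : ι → ℝ}
    (hp : ∀ j, (μ {ω | Y j ω = true}).toReal = p j) {J : κ → ι} (hJ : Function.Injective J)
    {U : ρ → Set (ι → Bool)} (hU : ∀ i, IsUpperSet (U i)) (R : Finset ρ)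
    (hUR : ∀ i ∉ R, DependsOn (· ∈ U i) (Set.range J)ᶜ) :
    (μ[|{ω | (Y · ω) ∈ ⋂ i, U i}] {ω | ∀ k, Y (J k) ω = true}).toReal ≤
      (∏ k, p (J k)) / ∏ i ∈ R, (μ {ω | (Y · ω) ∈ U i}).toReal := by
  classical
  set V := ⋂ (i) (_ : i ∉ R), U i
  have hV : DependsOn (· ∈ V) (Set.range J)ᶜ := fun a a' h => by
    simp only [V, Set.mem_iInter, eq_iff_iff]
    exact forall₂_congr fun i hi => (hUR i hi h).to_iff
  have hVR : ⋂ i, U i = V ∩ ⋂ i ∈ R, U i := by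
    ext a
    simp only [V, Set.mem_iInter, Set.mem_inter_iff]
    exact ⟨fun h => ⟨fun i _ => h i, fun i _ => h i⟩, fun h i => by by_cases hi : i ∈ R <;> tauto⟩
  have hFV := measure_pattern_mem_inter_eq_mul hY hind disjoint_compl_right
    (s := {a | ∀ k, a (J k) = true})
    (fun a a' h => propext (forall_congr' fun k => by rw [h _ (Set.mem_range_self k)])) hV
  set S := {ω | (Y · ω) ∈ ⋂ i, U i}
  rcases eq_or_ne (μ S) 0 with hS0 | hS0
  · rw [cond_eq_zero_of_meas_eq_zero hS0, Measure.coe_zero, Pi.zero_apply, ENNReal.toReal_zero,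
      ← toReal_measure_forall_eq_true hind hp hJ]
    positivity
  rw [← toReal_measure_forall_eq_true hind hp hJ]
  refine toReal_cond_le_div (measurableSet_pattern_mem hY _)
    (fun ω (hω : (Y · ω) ∈ ⋂ i, U i) => (hVR.subset hω).1) hFV ?_ ?_
  · refine prod_pos fun i _ => (ENNReal.toReal_pos hS0 (measure_ne_top _ _)).trans_le ?_
    exact ENNReal.toReal_mono (measure_ne_top _ _)
      (measure_mono fun ω hω => Set.mem_iInter.1 hω i)
  · simp only [S, hVR]
    exact toReal_measure_pattern_mul_prod_le hY hind (isUpperSet_iInter₂ fun i _ => hU i) hU R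

end BitPatterns

section Covering

variable {ι : Type*} [Fintype ι]

def coveredPatterns (w d : ι → ℝ) (β : ℝ) : Set (ι → Bool) :=
  {a | β ≤ ∑ j, w j * (d j + if a j then 1 else 0)}

lemma isUpperSet_coveredPatterns {w : ι → ℝ} (hw : ∀ j, 0 ≤ w j) (d : ι → ℝ) (β : ℝ) :
    IsUpperSet (coveredPatterns w d β) := by
  intro a a' haa' ha
  refine ha.trans (sum_le_sum fun j _ => mul_le_mul_of_nonneg_left ?_ (hw j))
  have hj : a j ≤ a' j := haa' j
  revert hj
  cases a j <;> cases a' j <;> simp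

lemma dependsOn_mem_coveredPatterns (w d : ι → ℝ) (β : ℝ) :
    DependsOn (· ∈ coveredPatterns w d β) {j | w j ≠ 0} := by
  intro a a' h
  simp only [coveredPatterns, Set.mem_ofPred_eq]
  congr 1
  refine sum_congr rfl fun j _ => ?_
  by_cases hj : w j = 0
  · simp [hj]
  · rw [h j hj]

end Covering

theorem cip_anti_fkg_general
    (m n : ℕ)
    (A : Fin m → Fin n → ℝ) (hA : ∀ i j, A i j ∈ Set.Icc (0 : ℝ) 1)
    (b : Fin m → ℝ)
    (x : Fin n → ℝ)
    (α : ℝ)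
    (p : Fin n → ℝ)
    {Ω : Type*} [MeasureSpace Ω] [IsProbabilityMeasure (ℙ : Measure Ω)]
    (X : Fin n → Ω → ℝ) (hXmeas : ∀ j, Measurable (X j))
    (hX01 : ∀ j ω, X j ω = 0 ∨ X j ω = 1)
    (hindep : iIndepFun X ℙ)
    (hXp : ∀ j, (ℙ {ω | X j ω = 1}).toReal = p j)
    (E : Fin m → Set Ω)
    (hE : ∀ i, E i = {ω | ∑ j, A i j * ((⌊α * x j⌋ : ℝ) + X j ω) < b i})
    (q : ℕ) (J : Fin q → Fin n) (hJ : StrictMono J) :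
    (ℙ[|⋂ i, (E i)ᶜ] (⋂ t, {ω | X (J t) ω = 1})).toReal ≤
      (∏ t, p (J t)) /
        ∏ i ∈ Finset.univ.filter (fun i : Fin m => ∃ t, A i (J t) ≠ 0),
          (1 - (ℙ (E i)).toReal) := by
  set Y : Fin n → Ω → Bool := fun j ω => decide (X j ω = 1)
  have hdecide : Measurable fun r : ℝ => decide (r = 1) :=
    measurable_to_bool (by simp [Set.preimage])
  have hY (j : Fin n) : Measurable (Y j) := hdecide.comp (hXmeas j)
  have hYp (j : Fin n) : (ℙ {ω | Y j ω = true}).toReal = p j := by simpa [Y] using hXp j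
  set U : Fin m → Set (Fin n → Bool) := fun i => coveredPatterns (A i) (fun j => ⌊α * x j⌋) (b i)
  have hEU (i : Fin m) : (E i)ᶜ = {ω | (Y · ω) ∈ U i} := by
    ext ω
    have hXY (j : Fin n) : X j ω = if Y j ω then 1 else 0 := by
      rcases hX01 j ω with h | h <;> simp [Y, h]
    simp [hE i, U, coveredPatterns, ← hXY]
  have hcompl (i : Fin m) : 1 - (ℙ (E i)).toReal = (ℙ {ω | (Y · ω) ∈ U i}).toReal := by
    rw [← hEU]
    exact (probReal_compl_eq_one_sub (hEU i ▸ measurableSet_pattern_mem hY _).of_compl).symm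
  have hS : ⋂ i, (E i)ᶜ = {ω | (Y · ω) ∈ ⋂ i, U i} := by ext ω; simp [hEU]
  have hF : ⋂ t, {ω | X (J t) ω = 1} = {ω | ∀ t, Y (J t) ω = true} := by ext ω; simp [Y]
  rw [hS, hF, prod_congr rfl fun i _ => hcompl i]
  refine toReal_cond_forall_eq_true_le hY (hindep.comp _ fun _ => hdecide) hYp hJ.injective
    (fun i => isUpperSet_coveredPatterns (fun j => (hA i j).1) _ _) _ fun i hi =>
      (dependsOn_mem_coveredPatterns _ _ _).mono ?_
  rintro j hj ⟨t, rfl⟩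
  simp only [mem_filter, mem_univ, true_and, not_exists, not_not] at hi
  exact hj (hi t)

/-- Consider a CIP with fractional solution `x* ≥ 0`, `Ax* ≥ b`, a
parameter `α > 1`, and general randomized rounding with parameter `p ∈ [0,1]^n`
(independent `X_j ∈ {0,1}` with `Pr(X_j = 1) = p_j`, and `z_j = ⌊α x*_j⌋ + X_j`). Let
`E_i ≡ ((Az)_i < b_i)` and suppose `Pr(⋀_i ¬E_i) > 0`. Then for every `q ≥ 1` and all
column indices `j₁ < j₂ < … < j_q`:
`Pr(X_{j₁} = … = X_{j_q} = 1 | ⋀_i ¬E_i) ≤ (Π_t p_{j_t}) / (Π_{i ∈ R(j₁,…,j_q)} (1 − Pr(E_i)))`,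
where `R(j₁,…,j_q)` is the set of rows of `A` with a nonzero coefficient on some column `j_t`. -/
theorem cip_anti_fkg
    (m n : ℕ)
    (A : Fin m → Fin n → ℝ) (hA : ∀ i j, A i j ∈ Set.Icc (0 : ℝ) 1)
    (b : Fin m → ℝ) (hb : ∀ i, 1 ≤ b i)
    (c : Fin n → ℝ) (hc : ∀ j, c j ∈ Set.Icc (0 : ℝ) 1) (hcmax : ∃ j, c j = 1)
    (x : Fin n → ℝ) (hx : ∀ j, 0 ≤ x j)
    (hAx : ∀ i, b i ≤ ∑ j, A i j * x j)
    (α : ℝ) (hα : 1 < α)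
    (p : Fin n → ℝ) (hp : ∀ j, p j ∈ Set.Icc (0 : ℝ) 1)
    {Ω : Type*} [MeasureSpace Ω] [IsProbabilityMeasure (ℙ : Measure Ω)]
    (X : Fin n → Ω → ℝ) (hXmeas : ∀ j, Measurable (X j))
    (hX01 : ∀ j ω, X j ω = 0 ∨ X j ω = 1)
    (hindep : iIndepFun X ℙ)
    (hXp : ∀ j, (ℙ {ω | X j ω = 1}).toReal = p j)
    (E : Fin m → Set Ω)
    (hE : ∀ i, E i = {ω | ∑ j, A i j * ((⌊α * x j⌋ : ℝ) + X j ω) < b i})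
    (hZpos : 0 < ℙ (⋂ i, (E i)ᶜ))
    (q : ℕ) (hq : 1 ≤ q) (J : Fin q → Fin n) (hJ : StrictMono J) :
    (ℙ[|⋂ i, (E i)ᶜ] (⋂ t, {ω | X (J t) ω = 1})).toReal ≤
      (∏ t, p (J t)) /
        ∏ i ∈ Finset.univ.filter (fun i : Fin m => ∃ t, A i (J t) ≠ 0),
          (1 - (ℙ (E i)).toReal) :=
  cip_anti_fkg_general m n A hA b x α p X hXmeas hX01 hindep hXp E hE q J hJ
end

section
/- Consider a CIP with a fractional solution x* ∈ ℝ_{≥0}^n with Ax* ≥ b and a parameter α > 1, and let the functions ch'_i be as defined. Let p ∈ [0,1]^n with p_n ∈ (0,1), let p' agree with p except p'_n = 0, and let p'' agree with p except p''_n = 1. Set q_i = ch'_i(p), q'_i = ch'_i(p'), q''_i = ch'_i(p'') for i ∈ [m]. Then for every i ∈ [m]: (1) 0 ≤ q''_i ≤ q'_i ≤ 1; (2) q_i ≥ p_n·q''_i + (1 − p_n)·q'_i; and (3) if row i of A has a zero coefficient on column n (i.e., i ∉ R(n)), then q'_i = q''_i = q_i. -/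
/-- The quantity `δ_i = 1 − (b_i − A_i·s)/μ_i`, where `s_j = ⌊α x*_j⌋` and
`μ_i = Σ_j A_{i,j}(α x*_j − s_j)`. -/
noncomputable def cipDelta (m n : ℕ) (A : Fin m → Fin n → ℝ) (b : Fin m → ℝ)
    (x : Fin n → ℝ) (α : ℝ) (i : Fin m) : ℝ :=
  1 - (b i - ∑ j, A i j * (⌊α * x j⌋ : ℝ)) / (∑ j, A i j * (α * x j - ⌊α * x j⌋))

/-- The function `ch_i(p) = (Π_j E[(1−δ_i)^{A_{i,j} X_j}]) / (1−δ_i)^{b_i − A_i·s}` for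
independent `X_j ∈ {0,1}` with `Pr(X_j = 1) = p_j`; here
`E[(1−δ_i)^{A_{i,j} X_j}] = p_j (1−δ_i)^{A_{i,j}} + (1 − p_j)`. -/
noncomputable def cipCh (m n : ℕ) (A : Fin m → Fin n → ℝ) (b : Fin m → ℝ)
    (x : Fin n → ℝ) (α : ℝ) (p : Fin n → ℝ) (i : Fin m) : ℝ :=
  (∏ j, (p j * (1 - cipDelta m n A b x α i) ^ (A i j) + (1 - p j))) /
    (1 - cipDelta m n A b x α i) ^ (b i - ∑ j, A i j * (⌊α * x j⌋ : ℝ))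

/-- `ch'_i(p) = min{ch_i(p), 1}`. -/
noncomputable def cipCh' (m n : ℕ) (A : Fin m → Fin n → ℝ) (b : Fin m → ℝ)
    (x : Fin n → ℝ) (α : ℝ) (p : Fin n → ℝ) (i : Fin m) : ℝ :=
  min (cipCh m n A b x α p i) 1


/-- Consider a CIP with fractional solution `x* ≥ 0`, `Ax* ≥ b`, and
`α > 1`, with the functions `ch'_i` as defined. Let `p ∈ [0,1]^n` with `p_n ∈ (0,1)`
(here `n` is the last column index), let `p'` agree with `p` except `p'_n = 0`, and `p''`
agree with `p` except `p''_n = 1`. With `q_i = ch'_i(p)`, `q'_i = ch'_i(p')`,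
`q''_i = ch'_i(p'')`: (1) `0 ≤ q''_i ≤ q'_i ≤ 1`; (2) `q_i ≥ p_n q''_i + (1−p_n) q'_i`;
(3) if row `i` has a zero coefficient on the last column then `q'_i = q''_i = q_i`. -/
theorem cip_q_vectors
    (m n : ℕ)
    (A : Fin m → Fin (n + 1) → ℝ) (hA : ∀ i j, A i j ∈ Set.Icc (0 : ℝ) 1)
    (b : Fin m → ℝ) (hb : ∀ i, 1 ≤ b i)
    (c : Fin (n + 1) → ℝ) (hc : ∀ j, c j ∈ Set.Icc (0 : ℝ) 1) (hcmax : ∃ j, c j = 1)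
    (x : Fin (n + 1) → ℝ) (hx : ∀ j, 0 ≤ x j)
    (hAx : ∀ i, b i ≤ ∑ j, A i j * x j)
    (α : ℝ) (hα : 1 < α)
    (hδ : ∀ i, cipDelta m (n + 1) A b x α i ∈ Set.Ioo (0 : ℝ) 1)
    (p : Fin (n + 1) → ℝ) (hp : ∀ j, p j ∈ Set.Icc (0 : ℝ) 1)
    (hpn : p (Fin.last n) ∈ Set.Ioo (0 : ℝ) 1)
    (p' p'' : Fin (n + 1) → ℝ)
    (hp' : p' = Function.update p (Fin.last n) 0)
    (hp'' : p'' = Function.update p (Fin.last n) 1)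
    (i : Fin m) :
    (0 ≤ cipCh' m (n + 1) A b x α p'' i ∧
      cipCh' m (n + 1) A b x α p'' i ≤ cipCh' m (n + 1) A b x α p' i ∧
      cipCh' m (n + 1) A b x α p' i ≤ 1) ∧
    (p (Fin.last n) * cipCh' m (n + 1) A b x α p'' i +
        (1 - p (Fin.last n)) * cipCh' m (n + 1) A b x α p' i ≤
      cipCh' m (n + 1) A b x α p i) ∧
    (A i (Fin.last n) = 0 →
      cipCh' m (n + 1) A b x α p' i = cipCh' m (n + 1) A b x α p i ∧
      cipCh' m (n + 1) A b x α p'' i = cipCh' m (n + 1) A b x α p i) := by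

  obtain ⟨hδ0, hδ1⟩ := hδ i
  obtain ⟨hpn0, hpn1⟩ := hpn
  set β := 1 - cipDelta m (n + 1) A b x α i with hβdef
  have hβ0 : 0 < β := by rw [hβdef]; linarith
  have hβ1 : β ≤ 1 := by rw [hβdef]; linarith
  set a := A i (Fin.last n) with hadef
  have ha0 : 0 ≤ a := (hA i _).1
  have hba : β ^ a ≤ 1 := Real.rpow_le_one hβ0.le hβ1 ha0
  have hba0 : 0 < β ^ a := Real.rpow_pos_of_pos hβ0 a
  set E := b i - ∑ j, A i j * (⌊α * x j⌋ : ℝ) with hE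
  have hD : 0 < β ^ E := Real.rpow_pos_of_pos hβ0 E
  set C := ∏ j : Fin n, (p j.castSucc * β ^ A i j.castSucc + (1 - p j.castSucc)) with hC
  have hC0 : 0 ≤ C := by
    apply Finset.prod_nonneg
    intro j _
    have h1 := (hp j.castSucc).1
    have h2 := (hp j.castSucc).2
    have h3 : (0:ℝ) ≤ β ^ A i j.castSucc := (Real.rpow_pos_of_pos hβ0 _).le
    nlinarith
  have hne : ∀ j : Fin n, j.castSucc ≠ Fin.last n := fun j => (Fin.castSucc_lt_last j).ne
  have key : ∀ t : ℝ, cipCh m (n + 1) A b x α (Function.update p (Fin.last n) t) i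
      = C * (t * β ^ a + (1 - t)) / β ^ E := by
    intro t
    rw [cipCh, ← hβdef, ← hE, Fin.prod_univ_castSucc, Function.update_self]
    have hfront : (∏ j : Fin n, ((Function.update p (Fin.last n) t) j.castSucc *
        β ^ A i j.castSucc + (1 - (Function.update p (Fin.last n) t) j.castSucc))) = C := by
      apply Finset.prod_congr rfl
      intro j _
      rw [Function.update_of_ne (hne j)]
    rw [hfront, ← hadef]
  have keyp : cipCh m (n + 1) A b x α p i
      = C * (p (Fin.last n) * β ^ a + (1 - p (Fin.last n))) / β ^ E := by
    have := key (p (Fin.last n))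
    rwa [Function.update_eq_self] at this
  have key' : cipCh m (n + 1) A b x α p' i = C * 1 / β ^ E := by
    rw [hp', key 0]; ring_nf
  have key'' : cipCh m (n + 1) A b x α p'' i = C * β ^ a / β ^ E := by
    rw [hp'', key 1]; ring_nf
  have hch''0 : 0 ≤ cipCh m (n + 1) A b x α p'' i := by
    rw [key'']; positivity
  have hch'' : cipCh m (n + 1) A b x α p'' i ≤ cipCh m (n + 1) A b x α p' i := by
    rw [key', key'']
    apply div_le_div_of_nonneg_right _ hD.le
    nlinarith
  refine ⟨⟨le_min hch''0 zero_le_one, min_le_min hch'' le_rfl, min_le_right _ _⟩, ?_, ?_⟩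
  · -- statement (2)
    apply le_min
    · have h1 : cipCh' m (n + 1) A b x α p'' i ≤ cipCh m (n + 1) A b x α p'' i :=
        min_le_left _ _
      have h2 : cipCh' m (n + 1) A b x α p' i ≤ cipCh m (n + 1) A b x α p' i :=
        min_le_left _ _
      have heq : p (Fin.last n) * cipCh m (n + 1) A b x α p'' i +
          (1 - p (Fin.last n)) * cipCh m (n + 1) A b x α p' i
          = cipCh m (n + 1) A b x α p i := by
        rw [keyp, key', key'']; ring
      nlinarith
    · have h1 : cipCh' m (n + 1) A b x α p'' i ≤ 1 := min_le_right _ _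
      have h2 : cipCh' m (n + 1) A b x α p' i ≤ 1 := min_le_right _ _
      nlinarith
  · -- statement (3)
    intro hA0
    have hba1 : β ^ a = 1 := by rw [hA0, Real.rpow_zero]
    have e1 : cipCh m (n + 1) A b x α p' i = cipCh m (n + 1) A b x α p i := by
      rw [key', keyp, hba1]; ring_nf
    have e2 : cipCh m (n + 1) A b x α p'' i = cipCh m (n + 1) A b x α p i := by
      rw [key'', keyp, hba1]; ring_nf
    exact ⟨by rw [cipCh', cipCh', e1], by rw [cipCh', cipCh', e2]⟩
end

section
/- Let m be a positive integer, let t ∈ [0,1], and let q, q', q'' ∈ ℝ^m satisfy, for every i ∈ [m]: 0 ≤ q''_i ≤ q'_i ≤ 1, q_i < 1, and q_i ≥ t·q''_i + (1 − t)·q'_i. For U ⊆ [m] and r ∈ ℝ^m define f(U, r) = Π_{i ∈ U} (1 − r_i), and define Δ(U) = (1 − t)·f(U, q') + t·f(U, q'') − f(U, q). Then for all U ⊆ V ⊆ [m]: (i) Δ(U) ≥ 0, and (ii) Δ(U)/f(U, q) ≤ Δ(V)/f(V, q) (note f(U, q) > 0 and f(V, q) > 0 since q_i < 1 for all i). -/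
lemma delta_key (t a b qi qi' qi'' : ℝ) (ht0 : 0 ≤ t) (ht1 : t ≤ 1)
    (hq'' : 0 ≤ qi'') (h2 : qi'' ≤ qi') (h3 : qi' ≤ 1)
    (hc : t * qi'' + (1 - t) * qi' ≤ qi)
    (ha : 0 ≤ a) (hab : a ≤ b) :
    (1 - qi) * ((1 - t) * a + t * b) ≤ (1 - t) * (1 - qi') * a + t * (1 - qi'') * b := by
  nlinarith [mul_nonneg (mul_nonneg ht0 (sub_nonneg.2 ht1))
      (mul_nonneg (sub_nonneg.2 hab) (sub_nonneg.2 h2)),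
    mul_nonneg (add_nonneg (mul_nonneg (sub_nonneg.2 ht1) ha)
      (mul_nonneg ht0 (ha.trans hab))) (sub_nonneg.2 hc)]

/-- Let `t ∈ [0,1]` and `q, q', q'' ∈ ℝ^m` satisfy, for every `i`:
`0 ≤ q''_i ≤ q'_i ≤ 1`, `q_i < 1`, and `q_i ≥ t·q''_i + (1−t)·q'_i`. With
`f(U, r) = Π_{i ∈ U} (1 − r_i)` and
`Δ(U) = (1−t)·f(U, q') + t·f(U, q'') − f(U, q)`, for all `U ⊆ V ⊆ [m]`:
(i) `Δ(U) ≥ 0`, and (ii) `Δ(U)/f(U, q) ≤ Δ(V)/f(V, q)`. -/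
theorem delta_monotone
    (m : ℕ) (hm : 0 < m) (t : ℝ) (ht : t ∈ Set.Icc (0 : ℝ) 1)
    (q q' q'' : Fin m → ℝ)
    (h1 : ∀ i, 0 ≤ q'' i) (h2 : ∀ i, q'' i ≤ q' i) (h3 : ∀ i, q' i ≤ 1)
    (h4 : ∀ i, q i < 1)
    (h5 : ∀ i, t * q'' i + (1 - t) * q' i ≤ q i)
    (f : Finset (Fin m) → (Fin m → ℝ) → ℝ)
    (hf : ∀ U r, f U r = ∏ i ∈ U, (1 - r i))
    (Δ : Finset (Fin m) → ℝ)
    (hΔ : ∀ U, Δ U = (1 - t) * f U q' + t * f U q'' - f U q)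
    (U V : Finset (Fin m)) (hUV : U ⊆ V) :
    0 ≤ Δ U ∧ Δ U / f U q ≤ Δ V / f V q := by
  obtain ⟨ht0, ht1⟩ := ht
  set N : Finset (Fin m) → ℝ := fun S => (1 - t) * f S q' + t * f S q'' with hN
  -- positivity of f S q
  have hPpos : ∀ S : Finset (Fin m), 0 < f S q := by
    intro S
    rw [hf]
    exact Finset.prod_pos fun i _ => by linarith [h4 i]
  have hanneg : ∀ S : Finset (Fin m), 0 ≤ f S q' := by
    intro S
    rw [hf]
    exact Finset.prod_nonneg fun i _ => by linarith [h3 i]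
  have hab : ∀ S : Finset (Fin m), f S q' ≤ f S q'' := by
    intro S
    rw [hf, hf]
    exact Finset.prod_le_prod (fun i _ => by linarith [h3 i])
      (fun i _ => by linarith [h2 i])
  -- key claim
  have claim : ∀ W : Finset (Fin m), ∀ S : Finset (Fin m),
      N S * f (S ∪ W) q ≤ N (S ∪ W) * f S q := by
    intro W
    induction W using Finset.induction_on with
    | empty => intro S; simp
    | @insert i W hmem0 ih =>
      intro S
      rw [Finset.union_insert]
      by_cases hmem : i ∈ S ∪ W
      · rw [Finset.insert_eq_self.2 hmem]; exact ih S
      · have hstep : (1 - q i) * N (S ∪ W) ≤ N (insert i (S ∪ W)) := by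
          have e1 : f (insert i (S ∪ W)) q' = (1 - q' i) * f (S ∪ W) q' := by
            rw [hf, hf, Finset.prod_insert hmem]
          have e2 : f (insert i (S ∪ W)) q'' = (1 - q'' i) * f (S ∪ W) q'' := by
            rw [hf, hf, Finset.prod_insert hmem]
          have := delta_key t (f (S ∪ W) q') (f (S ∪ W) q'') (q i) (q' i) (q'' i)
            ht0 ht1 (h1 i) (h2 i) (h3 i) (h5 i) (hanneg _) (hab _)
          rw [hN]; simp only []
          rw [e1, e2]
          nlinarith [this]
        have e3 : f (insert i (S ∪ W)) q = (1 - q i) * f (S ∪ W) q := by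
          rw [hf, hf, Finset.prod_insert hmem]
        have hqi : 0 ≤ 1 - q i := by linarith [h4 i]
        calc N S * f (insert i (S ∪ W)) q = (1 - q i) * (N S * f (S ∪ W) q) := by
              rw [e3]; ring
          _ ≤ (1 - q i) * (N (S ∪ W) * f S q) := by
              exact mul_le_mul_of_nonneg_left (ih S) hqi
          _ = ((1 - q i) * N (S ∪ W)) * f S q := by ring
          _ ≤ N (insert i (S ∪ W)) * f S q := by
              exact mul_le_mul_of_nonneg_right hstep (hPpos S).le
  -- part (i)
  have hNe : N ∅ = 1 := by rw [hN]; simp [hf]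
  have hfe : f ∅ q = 1 := by rw [hf]; simp
  have hU0 : 0 ≤ Δ U := by
    have h := claim U ∅
    rw [Finset.empty_union, hNe, hfe] at h
    rw [hΔ]
    simp only [hN] at h
    linarith
  refine ⟨hU0, ?_⟩
  -- part (ii)
  have hkey : N U * f V q ≤ N V * f U q := by
    have := claim (V \ U) U
    rwa [Finset.union_sdiff_of_subset hUV] at this
  rw [div_le_div_iff₀ (hPpos U) (hPpos V), hΔ, hΔ]
  simp only [hN] at hkey
  nlinarith [hkey]
end

section
/- Consider a multi-criteria CIP with a fractional solution x* ∈ ℝ_{≥0}^n satisfying Ax* ≥ b, a parameter α > 1, reals λ_1, …, λ_ℓ > 0, positive integers k_i ≤ λ_i, and the function Φ as defined. Let p ∈ [0,1]^n with p_n ∈ (0,1) and Φ(p) > 0, let p' agree with p except p'_n = 0, and let p'' agree with p except p''_n = 1. Then Φ(p) ≤ p_n·Φ(p'') + (1 − p_n)·Φ(p'); in particular, Φ(p') > 0 or Φ(p'') > 0. -/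
/-- The function `Φ(p)` from Theorem (mult-cip):
`Φ(p) = Π_{r∈[m]} (1 − ch'_r(p)) − Σ_{i=1}^{ℓ} (1/C(λ_i,k_i)) · Σ_{j₁<…<j_{k_i}}
(Π_t c_{i,j_t} p_{j_t}) · Π_{r ∉ R(j₁,…,j_{k_i})} (1 − ch'_r(p))`, where the inner sum
ranges over the `k_i`-element subsets of the columns and `R(T)` is the set of rows of `A`
with a nonzero coefficient on some column in `T`. -/
noncomputable def cipPhi (m n ℓ : ℕ) (A : Fin m → Fin n → ℝ) (b : Fin m → ℝ)
    (x : Fin n → ℝ) (α : ℝ) (c : Fin ℓ → Fin n → ℝ) (lam : Fin ℓ → ℝ) (k : Fin ℓ → ℕ)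
    (p : Fin n → ℝ) : ℝ :=
  (∏ r, (1 - cipCh' m n A b x α p r)) -
    ∑ i, (1 / genChoose (lam i) (k i)) *
      ∑ T ∈ Finset.univ.powersetCard (k i),
        (∏ j ∈ T, c i j * p j) *
          ∏ r ∈ Finset.univ.filter (fun r : Fin m => ∀ j ∈ T, A r j = 0),
            (1 - cipCh' m n A b x α p r)

open Finset Function

theorem genChoose_pos_s19 {x : ℝ} {r : ℕ} (h : (r : ℝ) ≤ x) : 0 < genChoose x r := by
  refine div_pos (prod_pos fun i hi => ?_) (by exact_mod_cast r.factorial_pos)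
  have : (i : ℝ) < r := by exact_mod_cast mem_range.mp hi
  linarith

theorem convex_comb_min_le_min {t : ℝ} (ht0 : 0 ≤ t) (ht1 : t ≤ 1) (a b c : ℝ) :
    t * min a c + (1 - t) * min b c ≤ min (t * a + (1 - t) * b) c := by
  have ht1' : 0 ≤ 1 - t := by linarith
  refine le_min ?_ ?_
  · gcongr <;> exact min_le_left _ _
  · calc t * min a c + (1 - t) * min b c ≤ t * c + (1 - t) * c := by
          gcongr <;> exact min_le_right _ _
      _ = c := by ring

section ConvexCombProd

variable {ι : Type*} {t : ℝ} {u v f : ι → ℝ}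

theorem convex_comb_mul_prod_le (ht0 : 0 ≤ t) (ht1 : t ≤ 1) (hv : ∀ r, 0 ≤ v r)
    (hvu : ∀ r, v r ≤ u r) (hf : ∀ r, 0 ≤ f r) (hfuv : ∀ r, f r ≤ t * u r + (1 - t) * v r)
    (W : Finset ι) {a b : ℝ} (hb : 0 ≤ b) (hba : b ≤ a) :
    (t * a + (1 - t) * b) * ∏ r ∈ W, f r ≤
      t * (a * ∏ r ∈ W, u r) + (1 - t) * (b * ∏ r ∈ W, v r) := by
  classical
  induction W using Finset.induction_on generalizing a b with
  | empty => simp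
  | insert r W hrW ih =>
    -- `t a u + (1 - t) b v - (t a + (1 - t) b) (t u + (1 - t) v) = t (1 - t) (a - b) (u - v)`
    have step : (t * a + (1 - t) * b) * f r ≤ t * (a * u r) + (1 - t) * (b * v r) := by
      nlinarith [mul_le_mul_of_nonneg_left (hfuv r) (by nlinarith : 0 ≤ t * a + (1 - t) * b),
        mul_nonneg (mul_nonneg ht0 (sub_nonneg.2 ht1))
          (mul_nonneg (sub_nonneg.2 hba) (sub_nonneg.2 (hvu r)))]
    rw [prod_insert hrW, prod_insert hrW, prod_insert hrW]
    calc (t * a + (1 - t) * b) * (f r * ∏ s ∈ W, f s)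
        = (t * a + (1 - t) * b) * f r * ∏ s ∈ W, f s := by ring
      _ ≤ (t * (a * u r) + (1 - t) * (b * v r)) * ∏ s ∈ W, f s :=
          mul_le_mul_of_nonneg_right step (prod_nonneg fun s _ => hf s)
      _ ≤ t * (a * u r * ∏ s ∈ W, u s) + (1 - t) * (b * v r * ∏ s ∈ W, v s) :=
          ih (mul_nonneg hb (hv r)) (mul_le_mul hba (hvu r) (hv r) (hb.trans hba))
      _ = _ := by ring

variable [Fintype ι]

theorem convex_comb_prod_mul_prod_le (ht0 : 0 ≤ t) (ht1 : t ≤ 1) (hv : ∀ r, 0 ≤ v r)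
    (hvu : ∀ r, v r ≤ u r) (hf : ∀ r, 0 ≤ f r) (hfuv : ∀ r, f r ≤ t * u r + (1 - t) * v r)
    (W : Finset ι) :
    (t * ∏ r ∈ W, u r + (1 - t) * ∏ r ∈ W, v r) * ∏ r, f r ≤
      (t * ∏ r, u r + (1 - t) * ∏ r, v r) * ∏ r ∈ W, f r := by
  classical
  have h := convex_comb_mul_prod_le ht0 ht1 hv hvu hf hfuv Wᶜ
    (prod_nonneg (s := W) fun r _ => hv r)
    (prod_le_prod (s := W) (fun r _ => hv r) fun r _ => hvu r)
  rw [← prod_mul_prod_compl W f, ← prod_mul_prod_compl W u, ← prod_mul_prod_compl W v]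
  calc _ = (t * ∏ r ∈ W, u r + (1 - t) * ∏ r ∈ W, v r) * (∏ r ∈ Wᶜ, f r) * ∏ r ∈ W, f r := by
        ring
    _ ≤ _ := mul_le_mul_of_nonneg_right h (prod_nonneg fun r _ => hf r)
    _ = _ := by ring

theorem prod_le_convex_comb_prod (ht0 : 0 ≤ t) (ht1 : t ≤ 1) (hv : ∀ r, 0 ≤ v r)
    (hvu : ∀ r, v r ≤ u r) (hf : ∀ r, 0 ≤ f r) (hfuv : ∀ r, f r ≤ t * u r + (1 - t) * v r) :
    ∏ r, f r ≤ t * ∏ r, u r + (1 - t) * ∏ r, v r := by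
  simpa using convex_comb_prod_mul_prod_le ht0 ht1 hv hvu hf hfuv ∅

end ConvexCombProd

theorem sub_le_sub_of_mul_le_mul {F S M S' : ℝ} (hF : 0 < F) (hSF : S ≤ F) (hFM : F ≤ M)
    (h : F * S' ≤ M * S) : F - S ≤ M - S' := by
  nlinarith [mul_le_mul_of_nonneg_right hFM (sub_nonneg.2 hSF)]

theorem prod_update_affine {ι : Type*} [Fintype ι] [DecidableEq ι] (w p : ι → ℝ) (j₀ : ι)
    (s : ℝ) :
    ∏ j, (update p j₀ s j * w j + (1 - update p j₀ s j)) =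
      (s * w j₀ + (1 - s)) * ∏ j ∈ univ.erase j₀, (p j * w j + (1 - p j)) := by
  rw [← mul_prod_erase univ _ (mem_univ j₀), update_self]
  exact congrArg _ (prod_congr rfl fun j hj => by rw [update_of_ne (ne_of_mem_erase hj)])

theorem penalty_term_convex_comb_le {ι κ : Type*} [Fintype ι] [DecidableEq κ] {u v f : ι → ℝ}
    {p w : κ → ℝ} {j₀ : κ} (hp₀ : p j₀ ∈ Set.Icc 0 1) (hv : ∀ r, 0 ≤ v r)
    (hvu : ∀ r, v r ≤ u r) (hf : ∀ r, 0 ≤ f r)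
    (hfuv : ∀ r, f r ≤ p j₀ * u r + (1 - p j₀) * v r) (hw : ∀ j, 0 ≤ w j) (hp : ∀ j, 0 ≤ p j)
    (T : Finset κ) (W : Finset ι) (hW : j₀ ∈ T → ∀ r ∈ W, u r = f r ∧ v r = f r) :
    (∏ r, f r) * (p j₀ * ((∏ j ∈ T, w j * update p j₀ 1 j) * ∏ r ∈ W, u r) +
        (1 - p j₀) * ((∏ j ∈ T, w j * update p j₀ 0 j) * ∏ r ∈ W, v r)) ≤
      (p j₀ * ∏ r, u r + (1 - p j₀) * ∏ r, v r) * ((∏ j ∈ T, w j * p j) * ∏ r ∈ W, f r) := by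
  have hK : 0 ≤ ∏ j ∈ T, w j * p j := prod_nonneg fun j _ => mul_nonneg (hw j) (hp j)
  by_cases hT : j₀ ∈ T
  · have hK₁ : ∏ j ∈ T, w j * p j = p j₀ * ∏ j ∈ T, w j * update p j₀ 1 j := by
      have hrest : ∏ j ∈ T.erase j₀, w j * update p j₀ 1 j = ∏ j ∈ T.erase j₀, w j * p j :=
        prod_congr rfl fun j hj => by rw [update_of_ne (ne_of_mem_erase hj)]
      rw [← mul_prod_erase T _ hT, ← mul_prod_erase T _ hT, update_self, hrest]
      ring
    have hK₀ : ∏ j ∈ T, w j * update p j₀ 0 j = 0 := prod_eq_zero hT (by simp)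
    have hu : ∏ r ∈ W, u r = ∏ r ∈ W, f r := prod_congr rfl fun r hr => (hW hT r hr).1
    have h := mul_le_mul_of_nonneg_right
      (prod_le_convex_comb_prod hp₀.1 hp₀.2 hv hvu hf hfuv)
      (mul_nonneg hK (prod_nonneg (s := W) fun r _ => hf r))
    rw [hK₀, hu, hK₁]
    rw [hK₁] at h
    linarith
  · have hK₁ : ∀ s, ∏ j ∈ T, w j * update p j₀ s j = ∏ j ∈ T, w j * p j := fun s =>
      prod_congr rfl fun j hj => by rw [update_of_ne (ne_of_mem_of_not_mem hj hT)]
    have h := mul_le_mul_of_nonneg_left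
      (convex_comb_prod_mul_prod_le hp₀.1 hp₀.2 hv hvu hf hfuv W) hK
    rw [hK₁, hK₁]
    linarith

section Cip

variable {m n ℓ : ℕ} {A : Fin m → Fin n → ℝ} {b : Fin m → ℝ} {x : Fin n → ℝ} {α : ℝ}
  {c : Fin ℓ → Fin n → ℝ} {lam : Fin ℓ → ℝ} {k : Fin ℓ → ℕ} {p : Fin n → ℝ} {j₀ : Fin n}

theorem cipCh_eq_convex_comb (r : Fin m) :
    cipCh m n A b x α p r = p j₀ * cipCh m n A b x α (update p j₀ 1) r +
      (1 - p j₀) * cipCh m n A b x α (update p j₀ 0) r := by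
  conv_lhs => rw [← update_eq_self j₀ p]
  simp only [cipCh, prod_update_affine (fun j => (1 - cipDelta m n A b x α r) ^ A r j)]
  ring

theorem cipCh_update_of_eq_zero {r : Fin m} (hA : A r j₀ = 0) (s : ℝ) :
    cipCh m n A b x α (update p j₀ s) r = cipCh m n A b x α p r := by
  conv_rhs => rw [← update_eq_self j₀ p]
  simp only [cipCh, prod_update_affine (fun j => (1 - cipDelta m n A b x α r) ^ A r j), hA,
    Real.rpow_zero]
  ring

theorem cipCh_update_one_le_update_zero {r : Fin m} (hA : 0 ≤ A r j₀)
    (hδ : cipDelta m n A b x α r ∈ Set.Ico 0 1) (hp : ∀ j, p j ∈ Set.Icc 0 1) :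
    cipCh m n A b x α (update p j₀ 1) r ≤ cipCh m n A b x α (update p j₀ 0) r := by
  obtain ⟨hδ0, hδ1⟩ := hδ
  have hbase : 0 < 1 - cipDelta m n A b x α r := by linarith
  simp only [cipCh, prod_update_affine (fun j => (1 - cipDelta m n A b x α r) ^ A r j)]
  refine div_le_div_of_nonneg_right (mul_le_mul_of_nonneg_right ?_ ?_)
    (Real.rpow_pos_of_pos hbase _).le
  · simpa using Real.rpow_le_one hbase.le (by linarith) hA
  · exact prod_nonneg fun j _ => add_nonneg
      (mul_nonneg (hp j).1 (Real.rpow_pos_of_pos hbase _).le) (sub_nonneg.2 (hp j).2)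

theorem one_sub_cipCh'_le_convex_comb (hp : p j₀ ∈ Set.Icc 0 1) (r : Fin m) :
    1 - cipCh' m n A b x α p r ≤ p j₀ * (1 - cipCh' m n A b x α (update p j₀ 1) r) +
      (1 - p j₀) * (1 - cipCh' m n A b x α (update p j₀ 0) r) := by
  have h := convex_comb_min_le_min hp.1 hp.2
    (cipCh m n A b x α (update p j₀ 1) r) (cipCh m n A b x α (update p j₀ 0) r) 1
  rw [cipCh', cipCh_eq_convex_comb (j₀ := j₀), cipCh', cipCh']
  linarith

noncomputable def cipPenalty (A : Fin m → Fin n → ℝ) (c : Fin ℓ → Fin n → ℝ) (lam : Fin ℓ → ℝ)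
    (k : Fin ℓ → ℕ) (q : Fin n → ℝ) (g : Fin m → ℝ) : ℝ :=
  ∑ i, (1 / genChoose (lam i) (k i)) *
    ∑ T ∈ univ.powersetCard (k i),
      (∏ j ∈ T, c i j * q j) * ∏ r ∈ univ.filter (fun r : Fin m => ∀ j ∈ T, A r j = 0), g r

theorem cipPhi_eq_sub_cipPenalty (q : Fin n → ℝ) :
    cipPhi m n ℓ A b x α c lam k q = ∏ r, (1 - cipCh' m n A b x α q r) -
      cipPenalty A c lam k q (fun r => 1 - cipCh' m n A b x α q r) := rfl

theorem cipPenalty_nonneg (hc : ∀ i j, 0 ≤ c i j) (hk : ∀ i, (k i : ℝ) ≤ lam i)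
    (hp : ∀ j, 0 ≤ p j) {g : Fin m → ℝ} (hg : ∀ r, 0 ≤ g r) : 0 ≤ cipPenalty A c lam k p g :=
  sum_nonneg fun i _ => mul_nonneg (one_div_nonneg.2 (genChoose_pos_s19 (hk i)).le) <|
    sum_nonneg fun _ _ => mul_nonneg (prod_nonneg fun j _ => mul_nonneg (hc i j) (hp j))
      (prod_nonneg fun r _ => hg r)

theorem cipPenalty_convex_comb_le {u v f : Fin m → ℝ} (hc : ∀ i j, 0 ≤ c i j)
    (hk : ∀ i, (k i : ℝ) ≤ lam i) (hp : ∀ j, p j ∈ Set.Icc 0 1) (hv : ∀ r, 0 ≤ v r)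
    (hvu : ∀ r, v r ≤ u r) (hf : ∀ r, 0 ≤ f r)
    (hfuv : ∀ r, f r ≤ p j₀ * u r + (1 - p j₀) * v r)
    (hfix : ∀ r, A r j₀ = 0 → u r = f r ∧ v r = f r) :
    (∏ r, f r) * (p j₀ * cipPenalty A c lam k (update p j₀ 1) u +
        (1 - p j₀) * cipPenalty A c lam k (update p j₀ 0) v) ≤
      (p j₀ * ∏ r, u r + (1 - p j₀) * ∏ r, v r) * cipPenalty A c lam k p f := by
  simp only [cipPenalty, mul_sum, ← sum_add_distrib]
  refine sum_le_sum fun i _ => sum_le_sum fun T _ => ?_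
  have h := mul_le_mul_of_nonneg_left
    (penalty_term_convex_comb_le (hp j₀) hv hvu hf hfuv (hc i) (fun j => (hp j).1) T
      (univ.filter fun r => ∀ j ∈ T, A r j = 0)
      fun hT r hr => hfix r ((mem_filter.1 hr).2 j₀ hT))
    (one_div_nonneg.2 (genChoose_pos_s19 (hk i)).le)
  linarith

theorem cipPhi_le_convex_comb (hA : ∀ r, 0 ≤ A r j₀)
    (hδ : ∀ r, cipDelta m n A b x α r ∈ Set.Ico 0 1) (hc : ∀ i j, 0 ≤ c i j)
    (hk : ∀ i, (k i : ℝ) ≤ lam i) (hp : ∀ j, p j ∈ Set.Icc 0 1)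
    (hΦ : 0 < cipPhi m n ℓ A b x α c lam k p) :
    cipPhi m n ℓ A b x α c lam k p ≤
      p j₀ * cipPhi m n ℓ A b x α c lam k (update p j₀ 1) +
        (1 - p j₀) * cipPhi m n ℓ A b x α c lam k (update p j₀ 0) := by
  have hslack : ∀ q r, 0 ≤ 1 - cipCh' m n A b x α q r := fun _ _ =>
    sub_nonneg.2 (min_le_right _ _)
  have hvu : ∀ r, 1 - cipCh' m n A b x α (update p j₀ 0) r ≤
      1 - cipCh' m n A b x α (update p j₀ 1) r := fun r =>
    sub_le_sub_left (min_le_min_right 1 (cipCh_update_one_le_update_zero (hA r) (hδ r) hp)) 1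
  have hfix : ∀ r, A r j₀ = 0 →
      1 - cipCh' m n A b x α (update p j₀ 1) r = 1 - cipCh' m n A b x α p r ∧
      1 - cipCh' m n A b x α (update p j₀ 0) r = 1 - cipCh' m n A b x α p r := fun r h => by
    simp only [cipCh', cipCh_update_of_eq_zero h, and_self]
  have hmix := cipPenalty_convex_comb_le hc hk hp (hslack _) hvu (hslack p)
    (one_sub_cipCh'_le_convex_comb (hp j₀)) hfix
  have hFM := prod_le_convex_comb_prod (hp j₀).1 (hp j₀).2 (hslack _) hvu (hslack p)
    (one_sub_cipCh'_le_convex_comb (hp j₀))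
  have hS := cipPenalty_nonneg (A := A) hc hk (fun j => (hp j).1) (hslack p)
  simp only [cipPhi_eq_sub_cipPenalty] at hΦ ⊢
  have := sub_le_sub_of_mul_le_mul (by linarith) (by linarith) hFM hmix
  linarith

end Cip

theorem cip_phi_convexity_general
    (m n ℓ : ℕ)
    (A : Fin m → Fin (n + 1) → ℝ) (hA : ∀ i j, A i j ∈ Set.Icc (0 : ℝ) 1)
    (b : Fin m → ℝ)
    (c : Fin ℓ → Fin (n + 1) → ℝ) (hc : ∀ i j, c i j ∈ Set.Icc (0 : ℝ) 1)
    (x : Fin (n + 1) → ℝ)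
    (α : ℝ)
    (hδ : ∀ i, cipDelta m (n + 1) A b x α i ∈ Set.Ioo (0 : ℝ) 1)
    (lam : Fin ℓ → ℝ)
    (k : Fin ℓ → ℕ) (hk : ∀ i, (k i : ℝ) ≤ lam i)
    (p : Fin (n + 1) → ℝ) (hp : ∀ j, p j ∈ Set.Icc (0 : ℝ) 1)
    (hpn : p (Fin.last n) ∈ Set.Ioo (0 : ℝ) 1)
    (hΦpos : 0 < cipPhi m (n + 1) ℓ A b x α c lam k p)
    (p' p'' : Fin (n + 1) → ℝ)
    (hp' : p' = Function.update p (Fin.last n) 0)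
    (hp'' : p'' = Function.update p (Fin.last n) 1) :
    cipPhi m (n + 1) ℓ A b x α c lam k p ≤
        p (Fin.last n) * cipPhi m (n + 1) ℓ A b x α c lam k p'' +
          (1 - p (Fin.last n)) * cipPhi m (n + 1) ℓ A b x α c lam k p' ∧
      (0 < cipPhi m (n + 1) ℓ A b x α c lam k p' ∨
        0 < cipPhi m (n + 1) ℓ A b x α c lam k p'') := by
  subst hp' hp''
  have hconv := cipPhi_le_convex_comb (j₀ := Fin.last n) (fun r => (hA r _).1)
    (fun r => Set.Ioo_subset_Ico_self (hδ r)) (fun i j => (hc i j).1) hk hp hΦpos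
  refine ⟨hconv, ?_⟩
  by_contra! hneg
  obtain ⟨ht0, ht1⟩ := hpn
  nlinarith [mul_nonpos_of_nonneg_of_nonpos ht0.le hneg.2,
    mul_nonpos_of_nonneg_of_nonpos (sub_nonneg.2 ht1.le) hneg.1]

/-- Consider a multi-criteria CIP with fractional solution `x* ≥ 0`,
`Ax* ≥ b`, `α > 1`, reals `λ_i > 0`, positive integers `k_i ≤ λ_i`, and `Φ` as defined.
Let `p ∈ [0,1]^n` with `p_n ∈ (0,1)` and `Φ(p) > 0` (`n` being the last column index), and
let `p'`, `p''` agree with `p` except `p'_n = 0`, `p''_n = 1`. Then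
`Φ(p) ≤ p_n·Φ(p'') + (1−p_n)·Φ(p')`; in particular `Φ(p') > 0` or `Φ(p'') > 0`. -/
theorem cip_phi_convexity
    (m n ℓ : ℕ)
    (A : Fin m → Fin (n + 1) → ℝ) (hA : ∀ i j, A i j ∈ Set.Icc (0 : ℝ) 1)
    (b : Fin m → ℝ) (hb : ∀ i, 1 ≤ b i)
    (c : Fin ℓ → Fin (n + 1) → ℝ) (hc : ∀ i j, c i j ∈ Set.Icc (0 : ℝ) 1)
    (hcmax : ∀ i, ∃ j, c i j = 1)
    (x : Fin (n + 1) → ℝ) (hx : ∀ j, 0 ≤ x j)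
    (hAx : ∀ i, b i ≤ ∑ j, A i j * x j)
    (α : ℝ) (hα : 1 < α)
    (hδ : ∀ i, cipDelta m (n + 1) A b x α i ∈ Set.Ioo (0 : ℝ) 1)
    (lam : Fin ℓ → ℝ) (hlam : ∀ i, 0 < lam i)
    (k : Fin ℓ → ℕ) (hkpos : ∀ i, 0 < k i) (hk : ∀ i, (k i : ℝ) ≤ lam i)
    (p : Fin (n + 1) → ℝ) (hp : ∀ j, p j ∈ Set.Icc (0 : ℝ) 1)
    (hpn : p (Fin.last n) ∈ Set.Ioo (0 : ℝ) 1)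
    (hΦpos : 0 < cipPhi m (n + 1) ℓ A b x α c lam k p)
    (p' p'' : Fin (n + 1) → ℝ)
    (hp' : p' = Function.update p (Fin.last n) 0)
    (hp'' : p'' = Function.update p (Fin.last n) 1) :
    cipPhi m (n + 1) ℓ A b x α c lam k p ≤
        p (Fin.last n) * cipPhi m (n + 1) ℓ A b x α c lam k p'' +
          (1 - p (Fin.last n)) * cipPhi m (n + 1) ℓ A b x α c lam k p' ∧
      (0 < cipPhi m (n + 1) ℓ A b x α c lam k p' ∨
        0 < cipPhi m (n + 1) ℓ A b x α c lam k p'') :=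
  cip_phi_convexity_general m n ℓ A hA b c hc x α hδ lam k hk p hp hpn hΦpos p' p'' hp' hp''
end
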